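/- arXiv:2210.02117 — 4 statements merged into one kernel-verified Lean document; each statement's English description precedes it below -/
import Mathlib

section
/- Let k ≥ 1, m ≥ 1, let φ be a 3-CNF formula with clauses C_1,…,C_m over the variables {v_{i,j} : i ∈ [k], j ∈ [k+1,2k]}, and let G be the weighted graph of the dominating-set reduction (with weights in ℕ ∪ {∞}). Then φ is satisfiable if and only if G admits a dominating set of total weight at most (2^{2k}+2)·k·m + 2^k·(m−1). -/
/-- A literal: a variable index `(i, j)` together with a sign (`true` = positive). -/
abbrev Lit : Type := (ℕ × ℕ) × Bool

/-- The literal `ℓ` is over a variable `v_{i,j}` with `i ∈ [k]` and `j ∈ [k+1,2k]`. -/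
def LitOK (k : ℕ) (ℓ : Lit) : Prop :=
  ℓ.1.1 ∈ Finset.Icc 1 k ∧ ℓ.1.2 ∈ Finset.Icc (k + 1) (2 * k)

/-- The assignment `f` makes the literal `ℓ` true. -/
def litSat (f : ℕ → ℕ → Bool) (ℓ : Lit) : Prop := f ℓ.1.1 ℓ.1.2 = ℓ.2

/-- `s ∈ 𝒮_ℓ`: for `ℓ = v_{i,j}` this means `s ∩ [k] = {i}` and `j ∈ s`; for
`ℓ = ¬v_{i,j}` it means `s ∩ [k] = {i}` and `j ∉ s`. -/
def memSLit (k : ℕ) (ℓ : Lit) (s : Finset ℕ) : Prop :=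
  s ∩ Finset.Icc 1 k = {ℓ.1.1} ∧ (if ℓ.2 = true then ℓ.1.2 ∈ s else ℓ.1.2 ∉ s)

/-- `𝒮 = {s ⊆ [2k] : |s ∩ [k]| = 1}`. -/
abbrev SS (k : ℕ) : Finset (Finset ℕ) :=
  (Finset.Icc 1 (2 * k)).powerset.filter fun s => (s ∩ Finset.Icc 1 k).card = 1

/-- The powerset of `[2k]`. -/
abbrev PP (k : ℕ) : Finset (Finset ℕ) := (Finset.Icc 1 (2 * k)).powerset

/-- Vertices of the dominating-set reduction graph: `a^i_s` (`i ∈ [m]`, `s ∈ 𝒮`);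
`a^{i,j}` (`i ∈ [m]`, `j ∈ [k]`, with `j : Fin k` representing `j+1`); `b^i_t` and
`b̂^i_t` (`i ∈ [m-1]`, `t ⊆ [2k]`); and `c_i` (`i ∈ [m]`). -/
abbrev DSVertex (k m : ℕ) : Type :=
  (Fin m × ↥(SS k)) ⊕ (Fin m × Fin k) ⊕
    (Fin (m - 1) × ↥(PP k)) ⊕ (Fin (m - 1) × ↥(PP k)) ⊕ Fin m

/-- The adjacency-generating relation of the dominating-set reduction graph:
each `K_{i,j} = A_i[𝒮_j] ∪ {a^{i,j}}` is a clique; `a^i_s ∼ b^i_t` and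
`b̂^i_t ∼ a^{i+1}_s` iff `|s ∩ t|` is odd; `b^i_t ∼ b̂^i_t`; and `c_i ∼ a^i_s` for every
`s ∈ 𝒮_{ℓ₁} ∪ 𝒮_{ℓ₂} ∪ 𝒮_{ℓ₃}` where `ℓ₁, ℓ₂, ℓ₃` are the literals of `C_i`. -/
def dsRel (k m : ℕ) (C : Fin m → Fin 3 → Lit) :
    DSVertex k m → DSVertex k m → Prop
  | Sum.inl (i, s), Sum.inl (i', s') =>
      i = i' ∧ s.val ∩ Finset.Icc 1 k = s'.val ∩ Finset.Icc 1 k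
  | Sum.inl (i, s), Sum.inr (Sum.inl (i', j)) =>
      i = i' ∧ s.val ∩ Finset.Icc 1 k = {(j : ℕ) + 1}
  | Sum.inl (i, s), Sum.inr (Sum.inr (Sum.inl (ib, t))) =>
      (i : ℕ) = (ib : ℕ) ∧ Odd (s.val ∩ t.val).card
  | Sum.inl (i, s), Sum.inr (Sum.inr (Sum.inr (Sum.inl (ib, t)))) =>
      (i : ℕ) = (ib : ℕ) + 1 ∧ Odd (s.val ∩ t.val).card
  | Sum.inr (Sum.inr (Sum.inl (ib, t))), Sum.inr (Sum.inr (Sum.inr (Sum.inl (ib', t')))) =>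
      ib = ib' ∧ t = t'
  | Sum.inr (Sum.inr (Sum.inr (Sum.inr i))), Sum.inl (i', s) =>
      i = i' ∧ ∃ q : Fin 3, memSLit k (C i q) s.val
  | _, _ => False

/-- The graph of the dominating-set reduction. -/
def DSGraph (k m : ℕ) (C : Fin m → Fin 3 → Lit) : SimpleGraph (DSVertex k m) :=
  SimpleGraph.fromRel (dsRel k m C)

/-- The weights (in `ℕ ∪ {∞} = WithTop ℕ`): `w(a^i_s) = 2^{2k} + 2`,
`w(a^{i,j}) = w(b̂^i_t) = ∞`, and `w(b^i_t) = w(c_i) = 1`. -/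
def dsWeight (k m : ℕ) : DSVertex k m → WithTop ℕ
  | Sum.inl _ => ((2 ^ (2 * k) + 2 : ℕ) : WithTop ℕ)
  | Sum.inr (Sum.inl _) => ⊤
  | Sum.inr (Sum.inr (Sum.inl _)) => 1
  | Sum.inr (Sum.inr (Sum.inr (Sum.inl _))) => ⊤
  | Sum.inr (Sum.inr (Sum.inr (Sum.inr _))) => 1

/-- A finite set of vertices dominates the graph `G`: every vertex is in `D` or
adjacent to a vertex of `D`. -/
def IsDomFinset {V : Type*} (G : SimpleGraph V) (D : Finset V) : Prop :=
  ∀ v : V, v ∈ D ∨ ∃ u ∈ D, G.Adj u v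


/-! ### Auxiliary combinatorics -/

section AuxComb
variable (k : ℕ)

/-- Build a set in `𝒮_j` from its `[k+1,2k]`-part: `sOf T j = {j} ∪ T j`. -/
def sOf (T : ℕ → Finset ℕ) (j : ℕ) : Finset ℕ := insert j (T j)

def NiceT (T : ℕ → Finset ℕ) : Prop :=
  ∀ j ∈ Finset.Icc 1 k, T j ⊆ Finset.Icc (k + 1) (2 * k)

def Phi (T : ℕ → Finset ℕ) (t₂ : Finset ℕ) : Finset ℕ :=
  ((Finset.Icc 1 k).filter fun j => Odd ((T j) ∩ t₂).card) ∪ t₂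

variable {k}

lemma disjK : Disjoint (Finset.Icc 1 k) (Finset.Icc (k + 1) (2 * k)) := by
  simp only [Finset.disjoint_left, Finset.mem_Icc]; omega

lemma unionK : Finset.Icc 1 k ∪ Finset.Icc (k + 1) (2 * k) = Finset.Icc 1 (2 * k) := by
  ext x; simp only [Finset.mem_union, Finset.mem_Icc]; omega

lemma splitK {s : Finset ℕ} (hs : s ⊆ Finset.Icc 1 (2 * k)) :
    (s ∩ Finset.Icc 1 k) ∪ (s ∩ Finset.Icc (k + 1) (2 * k)) = s := by
  rw [← Finset.inter_union_distrib_left, unionK, Finset.inter_eq_left.2 hs]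

variable {T : ℕ → Finset ℕ} (hT : NiceT k T) {j : ℕ} (hj : j ∈ Finset.Icc 1 k)

include hT hj

lemma not_mem_T : j ∉ T j := fun h => Finset.disjoint_left.1 disjK hj (hT j hj h)

lemma sOf_inter_K : sOf T j ∩ Finset.Icc 1 k = {j} := by
  rw [sOf, Finset.insert_inter_of_mem hj,
    Finset.disjoint_iff_inter_eq_empty.1 (disjK.symm.mono_left (hT j hj))]
  rfl

lemma sOf_subset : sOf T j ⊆ Finset.Icc 1 (2 * k) := by
  rw [sOf, Finset.insert_subset_iff]
  have := Finset.mem_Icc.1 hj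
  exact ⟨Finset.mem_Icc.2 ⟨this.1, by omega⟩,
    (hT j hj).trans (by rw [← unionK]; exact Finset.subset_union_right)⟩

lemma sOf_mem_SS : sOf T j ∈ SS k := by
  simp only [SS, Finset.mem_filter, Finset.mem_powerset]
  exact ⟨sOf_subset hT hj, by rw [sOf_inter_K hT hj]; simp⟩

lemma card_sOf_inter (t : Finset ℕ) :
    (sOf T j ∩ t).card = (if j ∈ t then 1 else 0) + (T j ∩ t).card := by
  by_cases h : j ∈ t
  · rw [sOf, Finset.insert_inter_of_mem h,
      Finset.card_insert_of_notMem (fun hx => not_mem_T hT hj (Finset.mem_of_mem_inter_left hx))]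
    simp [h, add_comm]
  · rw [sOf, Finset.insert_inter_of_notMem h]; simp [h]

lemma T_inter_restrict (t : Finset ℕ) :
    T j ∩ t = T j ∩ (t ∩ Finset.Icc (k + 1) (2 * k)) := by
  rw [Finset.inter_comm t, ← Finset.inter_assoc, Finset.inter_eq_left.2 (hT j hj)]

lemma even_sOf_iff (t : Finset ℕ) :
    Even ((sOf T j ∩ t).card) ↔ (j ∈ t ↔ Odd ((T j ∩ t).card)) := by
  rw [card_sOf_inter hT hj]
  by_cases h : j ∈ t <;>
    simp only [h, if_true, if_false, iff_true, iff_false, true_iff, false_iff,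
      Nat.even_add, Nat.odd_iff, Nat.even_iff] <;> omega

omit hj

omit hT in
lemma Phi_subset {t₂ : Finset ℕ} (ht₂ : t₂ ⊆ Finset.Icc (k + 1) (2 * k)) :
    Phi k T t₂ ⊆ Finset.Icc 1 (2 * k) := by
  rw [Phi, ← unionK]
  exact Finset.union_subset_union (Finset.filter_subset _ _) ht₂

omit hT in
lemma Phi_inter_K2 {t₂ : Finset ℕ} (ht₂ : t₂ ⊆ Finset.Icc (k + 1) (2 * k)) :
    Phi k T t₂ ∩ Finset.Icc (k + 1) (2 * k) = t₂ := by
  rw [Phi, Finset.union_inter_distrib_right,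
    Finset.disjoint_iff_inter_eq_empty.1 (disjK.mono_left (Finset.filter_subset _ _)),
    Finset.inter_eq_left.2 ht₂, Finset.empty_union]

omit hT in
lemma mem_Phi_iff {t₂ : Finset ℕ} (ht₂ : t₂ ⊆ Finset.Icc (k + 1) (2 * k))
    (hj : j ∈ Finset.Icc 1 k) :
    (j ∈ Phi k T t₂ ↔ Odd ((T j ∩ t₂).card)) := by
  rw [Phi, Finset.mem_union, Finset.mem_filter]
  have : j ∉ t₂ := fun h => Finset.disjoint_left.1 disjK hj (ht₂ h)
  tauto

lemma even_Phi {t₂ : Finset ℕ} (ht₂ : t₂ ⊆ Finset.Icc (k + 1) (2 * k))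
    (hj : j ∈ Finset.Icc 1 k) :
    Even ((sOf T j ∩ Phi k T t₂).card) := by
  rw [even_sOf_iff hT hj, T_inter_restrict hT hj, Phi_inter_K2 ht₂,
    mem_Phi_iff ht₂ hj]

lemma orth_iff {t : Finset ℕ} (ht : t ⊆ Finset.Icc 1 (2 * k)) :
    (∀ j ∈ Finset.Icc 1 k, Even ((sOf T j ∩ t).card)) ↔
      Phi k T (t ∩ Finset.Icc (k + 1) (2 * k)) = t := by
  constructor
  · intro h
    have hfilter : ((Finset.Icc 1 k).filter
        fun j => Odd ((T j) ∩ (t ∩ Finset.Icc (k + 1) (2 * k))).card) =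
        t ∩ Finset.Icc 1 k := by
      ext j
      simp only [Finset.mem_filter, Finset.mem_inter]
      constructor
      · rintro ⟨hjK, hodd⟩
        rw [← T_inter_restrict hT hjK] at hodd
        exact ⟨((even_sOf_iff hT hjK t).1 (h j hjK)).2 hodd, hjK⟩
      · rintro ⟨hjt, hjK⟩
        rw [← T_inter_restrict hT hjK]
        exact ⟨hjK, ((even_sOf_iff hT hjK t).1 (h j hjK)).1 hjt⟩
    rw [Phi, hfilter]
    exact splitK ht
  · intro h j hjK
    rw [← h]
    exact even_Phi hT Finset.inter_subset_right hjK

open Classical in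
/-- The set of `t ⊆ [2k]` orthogonal (mod 2) to every `sOf T j`, `j ∈ [k]`. -/
noncomputable def orthSet (k : ℕ) (T : ℕ → Finset ℕ) : Finset (Finset ℕ) :=
  (Finset.Icc 1 (2 * k)).powerset.filter
    fun t => ∀ j ∈ Finset.Icc 1 k, Even ((sOf T j ∩ t).card)

omit hT hj in
lemma mem_orthSet {t : Finset ℕ} :
    t ∈ orthSet k T ↔ t ⊆ Finset.Icc 1 (2 * k) ∧
      ∀ j ∈ Finset.Icc 1 k, Even ((sOf T j ∩ t).card) := by
  simp only [orthSet, Finset.mem_filter, Finset.mem_powerset]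

omit hj in
lemma orth_card : (orthSet k T).card = 2 ^ k := by
  classical
  have himg : orthSet k T = (Finset.Icc (k + 1) (2 * k)).powerset.image (Phi k T) := by
    ext t
    rw [mem_orthSet]
    simp only [Finset.mem_image, Finset.mem_powerset]
    constructor
    · rintro ⟨ht, h⟩
      exact ⟨t ∩ Finset.Icc (k + 1) (2 * k), Finset.inter_subset_right,
        (orth_iff hT ht).1 h⟩
    · rintro ⟨t₂, ht₂, rfl⟩
      exact ⟨Phi_subset ht₂, fun j hj => even_Phi hT ht₂ hj⟩
  rw [himg, Finset.card_image_of_injOn, Finset.card_powerset, Nat.card_Icc]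
  · congr 1; omega
  · intro x hx y hy hxy
    rw [← Phi_inter_K2 (T := T) (Finset.mem_powerset.1 hx), hxy,
      Phi_inter_K2 (Finset.mem_powerset.1 hy)]

omit hT

lemma transferT {T' : ℕ → Finset ℕ} (hT : NiceT k T) (hT' : NiceT k T')
    (h : ∀ t ⊆ Finset.Icc 1 (2 * k),
      (∀ j ∈ Finset.Icc 1 k, Even ((sOf T j ∩ t).card)) →
      (∀ j ∈ Finset.Icc 1 k, Even ((sOf T' j ∩ t).card)))
    (hj : j ∈ Finset.Icc 1 k) : T j = T' j := by
  ext x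
  by_cases hx : x ∈ Finset.Icc (k + 1) (2 * k)
  · have ht₂ : ({x} : Finset ℕ) ⊆ Finset.Icc (k + 1) (2 * k) := by simpa using hx
    have h2 := h (Phi k T {x}) (Phi_subset ht₂)
      (fun j' hj' => even_Phi hT ht₂ hj') j hj
    rw [even_sOf_iff hT' hj, T_inter_restrict hT' hj, Phi_inter_K2 (T := T) ht₂,
      mem_Phi_iff ht₂ hj] at h2
    have hsing : ∀ S : Finset ℕ, Odd ((S ∩ {x}).card) ↔ x ∈ S := by
      intro S
      by_cases hxS : x ∈ S
      · rw [Finset.inter_comm, Finset.singleton_inter_of_mem hxS]; simp [hxS]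
      · rw [Finset.inter_comm, Finset.singleton_inter_of_notMem hxS]; simp [hxS]
    rw [hsing, hsing] at h2
    exact h2
  · constructor
    · intro hmem; exact absurd (hT j hj hmem) hx
    · intro hmem; exact absurd (hT' j hj hmem) hx

end AuxComb


/-! ### Nice families -/

lemma exists_niceT {k : ℕ} (A : Finset ↥(SS k))
    (h1 : ∀ j ∈ Finset.Icc 1 k, ∃ s ∈ A, s.val ∩ Finset.Icc 1 k = {j})
    (h2 : A.card = k) :
    ∃ T : ℕ → Finset ℕ, NiceT k T ∧
      A.image Subtype.val = (Finset.Icc 1 k).image (sOf T) := by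
  classical
  choose s hsA hsK using h1
  refine ⟨fun j => if h : j ∈ Finset.Icc 1 k then (s j h).val ∩ Finset.Icc (k + 1) (2 * k)
    else ∅, ?_, ?_⟩
  case refine_1 =>
    intro j hj
    dsimp only
    rw [dif_pos hj]
    exact Finset.inter_subset_right
  set T : ℕ → Finset ℕ := fun j => if h : j ∈ Finset.Icc 1 k then
    (s j h).val ∩ Finset.Icc (k + 1) (2 * k) else ∅ with hTdef
  have hT : NiceT k T := by
    intro j hj
    rw [hTdef]; dsimp only
    rw [dif_pos hj]
    exact Finset.inter_subset_right
  have hsOf : ∀ j, ∀ hj : j ∈ Finset.Icc 1 k, sOf T j = (s j hj).val := by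
    intro j hj
    have hss : (s j hj).val ⊆ Finset.Icc 1 (2 * k) := by
      have := (s j hj).2
      simp only [SS, Finset.mem_filter, Finset.mem_powerset] at this
      exact this.1
    have hsplit := splitK hss
    rw [hsK j hj] at hsplit
    rw [sOf]
    simp only [hTdef]
    rw [dif_pos hj, Finset.insert_eq]
    exact hsplit
  have hsub : (Finset.Icc 1 k).image (sOf T) ⊆ A.image Subtype.val := by
    intro x hx
    obtain ⟨j, hj, rfl⟩ := Finset.mem_image.1 hx
    exact Finset.mem_image.2 ⟨s j hj, hsA j hj, (hsOf j hj).symm⟩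
  have hcard1 : (A.image Subtype.val).card = k := by
    rw [Finset.card_image_of_injective _ Subtype.val_injective, h2]
  have hcard2 : ((Finset.Icc 1 k).image (sOf T)).card = k := by
    rw [Finset.card_image_of_injOn, Nat.card_Icc]
    · omega
    · intro a ha b hb hab
      have := sOf_inter_K hT (Finset.mem_coe.1 ha)
      rw [hab, sOf_inter_K hT (Finset.mem_coe.1 hb)] at this
      exact (Finset.singleton_injective this).symm
  exact (Finset.eq_of_subset_of_card_le hsub (by omega)).symm

/-! ### The forward direction -/

lemma dsAdj_iff {k m : ℕ} (C : Fin m → Fin 3 → Lit) (u v : DSVertex k m) :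
    (DSGraph k m C).Adj u v ↔ u ≠ v ∧ (dsRel k m C u v ∨ dsRel k m C v u) :=
  SimpleGraph.fromRel_adj _ u v

lemma forward {k m : ℕ} (hk : 1 ≤ k) (hm : 1 ≤ m) (C : Fin m → Fin 3 → Lit)
    (hC : ∀ p q, LitOK k (C p q))
    (f : ℕ → ℕ → Bool) (hf : ∀ p, ∃ q, litSat f (C p q)) :
    ∃ D : Finset (DSVertex k m), IsDomFinset (DSGraph k m C) D ∧
      ∑ v ∈ D, dsWeight k m v ≤
        (((2 ^ (2 * k) + 2) * k * m + 2 ^ k * (m - 1) : ℕ) : WithTop ℕ) := by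
  classical
  set T : ℕ → Finset ℕ := fun j => (Finset.Icc (k + 1) (2 * k)).filter (fun j' => f j j')
    with hTdef
  have hNT : NiceT k T := fun j _ => Finset.filter_subset _ _
  set DA : Finset (DSVertex k m) :=
    (Finset.univ ×ˢ (Finset.Icc 1 k).attach).image
      (fun p : Fin m × {j // j ∈ Finset.Icc 1 k} =>
        Sum.inl (p.1, ⟨sOf T p.2.1, sOf_mem_SS hNT p.2.2⟩)) with hDA
  set DB : Finset (DSVertex k m) :=
    (Finset.univ ×ˢ (Finset.Icc (k + 1) (2 * k)).powerset.attach).image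
      (fun p : Fin (m - 1) × {t // t ∈ (Finset.Icc (k + 1) (2 * k)).powerset} =>
        Sum.inr (Sum.inr (Sum.inl (p.1, ⟨Phi k T p.2.1,
          Finset.mem_powerset.2 (Phi_subset (T := T) (Finset.mem_powerset.1 p.2.2))⟩))))
    with hDB
  have hmemDA : ∀ (i : Fin m) (j : ℕ) (hj : j ∈ Finset.Icc 1 k),
      (Sum.inl (i, ⟨sOf T j, sOf_mem_SS hNT hj⟩) : DSVertex k m) ∈ DA := by
    intro i j hj
    rw [hDA, Finset.mem_image]
    exact ⟨(i, ⟨j, hj⟩), by simp, rfl⟩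
  have hmemDB : ∀ (i : Fin (m - 1)) (t : ↥(PP k)),
      Phi k T (t.val ∩ Finset.Icc (k + 1) (2 * k)) = t.val →
      (Sum.inr (Sum.inr (Sum.inl (i, t))) : DSVertex k m) ∈ DB := by
    intro i t ht
    rw [hDB, Finset.mem_image]
    refine ⟨(i, ⟨t.val ∩ Finset.Icc (k + 1) (2 * k),
      Finset.mem_powerset.2 Finset.inter_subset_right⟩), by simp, ?_⟩
    simp only [Sum.inr.injEq, Sum.inl.injEq, Prod.mk.injEq, true_and]
    exact Subtype.ext ht
  refine ⟨DA ∪ DB, ?_, ?_⟩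
  · -- domination
    intro v
    match v with
    | Sum.inl (i, s) =>
      have hs := s.2
      simp only [SS, Finset.mem_filter, Finset.mem_powerset] at hs
      obtain ⟨j, hj⟩ := Finset.card_eq_one.1 hs.2
      have hjK : j ∈ Finset.Icc 1 k := by
        have : j ∈ s.val ∩ Finset.Icc 1 k := hj ▸ Finset.mem_singleton_self j
        exact (Finset.mem_inter.1 this).2
      by_cases huv : (Sum.inl (i, ⟨sOf T j, sOf_mem_SS hNT hjK⟩) : DSVertex k m)
          = Sum.inl (i, s)
      · exact Or.inl (by rw [← huv]; exact Finset.mem_union_left _ (hmemDA i j hjK))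
      · refine Or.inr ⟨Sum.inl (i, ⟨sOf T j, sOf_mem_SS hNT hjK⟩),
          Finset.mem_union_left _ (hmemDA i j hjK),
          (dsAdj_iff C _ _).2 ⟨huv, Or.inl ?_⟩⟩
        exact ⟨rfl, by rw [sOf_inter_K hNT hjK, hj]⟩
    | Sum.inr (Sum.inl (i, jf)) =>
      have hjK : (jf : ℕ) + 1 ∈ Finset.Icc 1 k := Finset.mem_Icc.2 ⟨by omega, jf.isLt⟩
      refine Or.inr ⟨Sum.inl (i, ⟨sOf T ((jf : ℕ) + 1), sOf_mem_SS hNT hjK⟩),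
        Finset.mem_union_left _ (hmemDA i _ hjK),
        (dsAdj_iff C _ _).2 ⟨by simp, Or.inl ?_⟩⟩
      exact ⟨rfl, sOf_inter_K hNT hjK⟩
    | Sum.inr (Sum.inr (Sum.inl (ib, t))) =>
      have htsub : t.val ⊆ Finset.Icc 1 (2 * k) := Finset.mem_powerset.1 t.2
      by_cases hcase : ∀ j ∈ Finset.Icc 1 k, Even ((sOf T j ∩ t.val).card)
      · exact Or.inl (Finset.mem_union_right _
          (hmemDB ib t ((orth_iff hNT htsub).1 hcase)))
      · push_neg at hcase
        obtain ⟨j, hjK, hodd⟩ := hcase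
        rw [Nat.not_even_iff_odd] at hodd
        refine Or.inr ⟨Sum.inl (⟨(ib : ℕ), lt_of_lt_of_le ib.isLt (Nat.sub_le m 1)⟩,
          ⟨sOf T j, sOf_mem_SS hNT hjK⟩),
          Finset.mem_union_left _ (hmemDA _ j hjK),
          (dsAdj_iff C _ _).2 ⟨by simp, Or.inl ⟨rfl, hodd⟩⟩⟩
    | Sum.inr (Sum.inr (Sum.inr (Sum.inl (ib, t)))) =>
      have htsub : t.val ⊆ Finset.Icc 1 (2 * k) := Finset.mem_powerset.1 t.2
      by_cases hcase : ∀ j ∈ Finset.Icc 1 k, Even ((sOf T j ∩ t.val).card)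
      · refine Or.inr ⟨Sum.inr (Sum.inr (Sum.inl (ib, t))),
          Finset.mem_union_right _ (hmemDB ib t ((orth_iff hNT htsub).1 hcase)),
          (dsAdj_iff C _ _).2 ⟨by simp, Or.inl ⟨rfl, rfl⟩⟩⟩
      · push_neg at hcase
        obtain ⟨j, hjK, hodd⟩ := hcase
        rw [Nat.not_even_iff_odd] at hodd
        have hlt : (ib : ℕ) + 1 < m := by
          have := ib.isLt; omega
        refine Or.inr ⟨Sum.inl (⟨(ib : ℕ) + 1, hlt⟩, ⟨sOf T j, sOf_mem_SS hNT hjK⟩),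
          Finset.mem_union_left _ (hmemDA _ j hjK),
          (dsAdj_iff C _ _).2 ⟨by simp, Or.inl ⟨rfl, hodd⟩⟩⟩
    | Sum.inr (Sum.inr (Sum.inr (Sum.inr i))) =>
      obtain ⟨q, hq⟩ := hf i
      obtain ⟨hi0, hj0⟩ := hC i q
      set i0 := (C i q).1.1
      set j0 := (C i q).1.2
      refine Or.inr ⟨Sum.inl (i, ⟨sOf T i0, sOf_mem_SS hNT hi0⟩),
        Finset.mem_union_left _ (hmemDA i i0 hi0),
        (dsAdj_iff C _ _).2 ⟨by simp, Or.inr ?_⟩⟩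
      refine ⟨rfl, q, sOf_inter_K hNT hi0, ?_⟩
      have hne : j0 ≠ i0 := by
        have h1 := Finset.mem_Icc.1 hi0
        have h2 := Finset.mem_Icc.1 hj0
        omega
      have hmem : j0 ∈ sOf T i0 ↔ f i0 j0 = true := by
        rw [sOf, Finset.mem_insert, hTdef]
        simp [hne, hj0]
      rw [litSat] at hq
      rcases h2 : (C i q).2 with _ | _
      · rw [h2] at hq
        simp only [if_neg (by simp : ¬(false = true))]
        rw [hmem]; simpa using hq
      · rw [h2] at hq
        simp only [if_pos rfl]
        exact hmem.2 hq
  · -- weight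
    have hdisj : Disjoint DA DB := by
      rw [Finset.disjoint_left]
      rintro v hvA hvB
      rw [hDA, Finset.mem_image] at hvA
      rw [hDB, Finset.mem_image] at hvB
      obtain ⟨p, _, rfl⟩ := hvA
      obtain ⟨p', _, h⟩ := hvB
      exact absurd h (by simp)
    rw [Finset.sum_union hdisj]
    have hinjA : ∀ x ∈ Finset.univ ×ˢ (Finset.Icc 1 k).attach,
        ∀ y ∈ Finset.univ ×ˢ (Finset.Icc 1 k).attach,
        (fun p : Fin m × {j // j ∈ Finset.Icc 1 k} =>
          (Sum.inl (p.1, ⟨sOf T p.2.1, sOf_mem_SS hNT p.2.2⟩) : DSVertex k m)) x =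
        (fun p => Sum.inl (p.1, ⟨sOf T p.2.1, sOf_mem_SS hNT p.2.2⟩)) y → x = y := by
      rintro ⟨i1, j1⟩ h1 ⟨i2, j2⟩ h2 heq
      simp only [Sum.inl.injEq, Prod.mk.injEq, Subtype.mk.injEq] at heq
      obtain ⟨hi, hs⟩ := heq
      have := sOf_inter_K hNT j1.2
      rw [hs, sOf_inter_K hNT j2.2] at this
      have hj : j1.val = j2.val := (Finset.singleton_injective this).symm
      exact Prod.ext hi (Subtype.ext hj)
    have hinjB : ∀ x ∈ Finset.univ ×ˢ (Finset.Icc (k + 1) (2 * k)).powerset.attach,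
        ∀ y ∈ Finset.univ ×ˢ (Finset.Icc (k + 1) (2 * k)).powerset.attach,
        (fun p : Fin (m - 1) × {t // t ∈ (Finset.Icc (k + 1) (2 * k)).powerset} =>
          (Sum.inr (Sum.inr (Sum.inl (p.1, ⟨Phi k T p.2.1,
            Finset.mem_powerset.2 (Phi_subset (T := T)
              (Finset.mem_powerset.1 p.2.2))⟩))) : DSVertex k m)) x =
        (fun p => Sum.inr (Sum.inr (Sum.inl (p.1, ⟨Phi k T p.2.1,
          Finset.mem_powerset.2 (Phi_subset (T := T)
            (Finset.mem_powerset.1 p.2.2))⟩)))) y → x = y := by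
      rintro ⟨i1, t1⟩ h1 ⟨i2, t2⟩ h2 heq
      simp only [Sum.inr.injEq, Sum.inl.injEq, Prod.mk.injEq, Subtype.mk.injEq] at heq
      obtain ⟨hi, hs⟩ := heq
      have ht : t1.val = t2.val := by
        rw [← Phi_inter_K2 (T := T) (Finset.mem_powerset.1 t1.2), hs,
          Phi_inter_K2 (Finset.mem_powerset.1 t2.2)]
      exact Prod.ext hi (Subtype.ext ht)
    have hsumA : ∑ v ∈ DA, dsWeight k m v = (m * k) • ((2 ^ (2 * k) + 2 : ℕ) : WithTop ℕ) := by
      rw [hDA, Finset.sum_image hinjA]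
      simp only [dsWeight]
      rw [Finset.sum_const]
      congr 1
      rw [Finset.card_product, Finset.card_attach, Nat.card_Icc]
      simp only [Finset.card_univ, Fintype.card_fin]
      have he : k + 1 - 1 = k := by omega
      rw [he]
    have hsumB : ∑ v ∈ DB, dsWeight k m v = ((m - 1) * 2 ^ k) • (1 : WithTop ℕ) := by
      rw [hDB, Finset.sum_image hinjB]
      simp only [dsWeight]
      rw [Finset.sum_const]
      congr 1
      rw [Finset.card_product, Finset.card_attach, Finset.card_powerset, Nat.card_Icc]
      simp only [Finset.card_univ, Fintype.card_fin]
      have he : 2 * k + 1 - (k + 1) = k := by omega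
      rw [he]
    rw [hsumA, hsumB]
    have h1 : (m * k) • ((2 ^ (2 * k) + 2 : ℕ) : WithTop ℕ) =
        ((m * k * (2 ^ (2 * k) + 2) : ℕ) : WithTop ℕ) := by
      rw [nsmul_eq_mul]; norm_cast
    have h2 : ((m - 1) * 2 ^ k) • (1 : WithTop ℕ) = (((m - 1) * 2 ^ k : ℕ) : WithTop ℕ) := by
      rw [nsmul_eq_mul]; norm_cast; simp
    rw [h1, h2, ← Nat.cast_add, Nat.cast_le]
    apply le_of_eq
    ring


/-! ### The backward direction -/

/-- Nat-valued weights (`0` on the infinite-weight vertices). -/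
def natW (k m : ℕ) : DSVertex k m → ℕ
  | Sum.inl _ => 2 ^ (2 * k) + 2
  | Sum.inr (Sum.inl _) => 0
  | Sum.inr (Sum.inr (Sum.inl _)) => 1
  | Sum.inr (Sum.inr (Sum.inr (Sum.inl _))) => 0
  | Sum.inr (Sum.inr (Sum.inr (Sum.inr _))) => 1

lemma sum_fin_split {M : Type*} [AddCommMonoid M] {m : ℕ} (hm : 1 ≤ m) (g : Fin m → M) :
    ∑ i, g i = g ⟨0, hm⟩ + ∑ i' : Fin (m - 1), g ⟨i'.val + 1, by have := i'.isLt; omega⟩ := by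
  obtain ⟨n, rfl⟩ : ∃ n, m = n + 1 := ⟨m - 1, by omega⟩
  rw [Fin.sum_univ_succ]
  congr 1

lemma backward {k m : ℕ} (hk : 1 ≤ k) (hm : 1 ≤ m) (C : Fin m → Fin 3 → Lit)
    (hC : ∀ p q, LitOK k (C p q))
    (D : Finset (DSVertex k m)) (hdom : IsDomFinset (DSGraph k m C) D)
    (hW : ∑ v ∈ D, dsWeight k m v ≤
      (((2 ^ (2 * k) + 2) * k * m + 2 ^ k * (m - 1) : ℕ) : WithTop ℕ)) :
    ∃ f : ℕ → ℕ → Bool, ∀ p, ∃ q, litSat f (C p q) := by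
  classical
  -- no infinite-weight vertex lies in `D`
  have hnotop : ∀ v ∈ D, dsWeight k m v ≠ ⊤ := by
    intro v hv htop
    have h1 : (⊤ : WithTop ℕ) ≤ ∑ u ∈ D, dsWeight k m u :=
      htop ▸ Finset.single_le_sum (fun u _ => zero_le) hv
    exact WithTop.coe_ne_top (top_le_iff.1 (h1.trans hW))
  have hnoAJ : ∀ (i : Fin m) (j : Fin k), (Sum.inr (Sum.inl (i, j)) : DSVertex k m) ∉ D :=
    fun i j hv => hnotop _ hv rfl
  have hnoBH : ∀ (i : Fin (m - 1)) (t : ↥(PP k)),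
      (Sum.inr (Sum.inr (Sum.inr (Sum.inl (i, t)))) : DSVertex k m) ∉ D :=
    fun i t hv => hnotop _ hv rfl
  -- the slices of `D`
  set Ai : Fin m → Finset ↥(SS k) :=
    fun i => Finset.univ.filter fun s => Sum.inl (i, s) ∈ D with hAidef
  set Bi : Fin (m - 1) → Finset ↥(PP k) :=
    fun i => Finset.univ.filter fun t => Sum.inr (Sum.inr (Sum.inl (i, t))) ∈ D with hBidef
  set Ci : Finset (Fin m) :=
    Finset.univ.filter (fun i => Sum.inr (Sum.inr (Sum.inr (Sum.inr i))) ∈ D) with hCidef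
  -- pass to natural number weights
  have hcast : ∀ v ∈ D, dsWeight k m v = ((natW k m v : ℕ) : WithTop ℕ) := by
    intro v hv
    match v with
    | Sum.inl _ => rfl
    | Sum.inr (Sum.inl p) => exact absurd rfl (hnotop _ hv)
    | Sum.inr (Sum.inr (Sum.inl p)) => simp [dsWeight, natW]
    | Sum.inr (Sum.inr (Sum.inr (Sum.inl p))) => exact absurd rfl (hnotop _ hv)
    | Sum.inr (Sum.inr (Sum.inr (Sum.inr p))) => simp [dsWeight, natW]
  have hWnat : ∑ v ∈ D, natW k m v ≤ (2 ^ (2 * k) + 2) * k * m + 2 ^ k * (m - 1) := by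
    have hsumcast : ∑ v ∈ D, dsWeight k m v = ((∑ v ∈ D, natW k m v : ℕ) : WithTop ℕ) := by
      rw [Nat.cast_sum]
      exact Finset.sum_congr rfl hcast
    rw [hsumcast] at hW
    exact_mod_cast hW
  -- decompose the weight
  have hdecomp : ∑ v ∈ D, natW k m v =
      (∑ i : Fin m, (2 ^ (2 * k) + 2) * (Ai i).card) +
        ((∑ i : Fin (m - 1), (Bi i).card) + Ci.card) := by
    have h0 : ∑ v ∈ D, natW k m v = ∑ v : DSVertex k m, if v ∈ D then natW k m v else 0 := by
      rw [Finset.sum_ite_mem, Finset.univ_inter]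
    rw [h0, Fintype.sum_sum_type, Fintype.sum_sum_type, Fintype.sum_sum_type,
      Fintype.sum_sum_type]
    congr 1
    · rw [Fintype.sum_prod_type]
      refine Finset.sum_congr rfl (fun i _ => ?_)
      simp only [hAidef]
      rw [Finset.card_filter, Finset.mul_sum]
      refine Finset.sum_congr rfl (fun sv _ => ?_)
      by_cases h : Sum.inl (i, sv) ∈ D <;> simp [h, natW]
    · have hz1 : ∀ p : Fin m × Fin k,
          (if (Sum.inr (Sum.inl p) : DSVertex k m) ∈ D then natW k m (Sum.inr (Sum.inl p))
            else 0) = 0 := by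
        intro p; simp [natW]
      have hz2 : ∀ p : Fin (m - 1) × ↥(PP k),
          (if (Sum.inr (Sum.inr (Sum.inr (Sum.inl p))) : DSVertex k m) ∈ D then
            natW k m (Sum.inr (Sum.inr (Sum.inr (Sum.inl p)))) else 0) = 0 := by
        intro p; simp [natW]
      rw [Finset.sum_congr rfl (fun p _ => hz1 p), Finset.sum_const_zero, zero_add,
        Finset.sum_congr rfl (fun p _ => hz2 p), Finset.sum_const_zero, zero_add]
      congr 1
      · rw [Fintype.sum_prod_type]
        refine Finset.sum_congr rfl (fun i _ => ?_)
        simp only [hBidef]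
        rw [Finset.card_filter]
        refine Finset.sum_congr rfl (fun tv _ => ?_)
        by_cases h : (Sum.inr (Sum.inr (Sum.inl (i, tv))) : DSVertex k m) ∈ D <;>
          simp [h, natW]
      · simp only [hCidef]
        rw [Finset.card_filter]
        refine Finset.sum_congr rfl (fun i _ => ?_)
        by_cases h : (Sum.inr (Sum.inr (Sum.inr (Sum.inr i))) : DSVertex k m) ∈ D <;>
          simp [h, natW]
  -- each clique  -- each clique K_{i,j} forces an element of A_i with trace {j}
  have h_aij : ∀ (i : Fin m), ∀ j ∈ Finset.Icc 1 k,
      ∃ s ∈ Ai i, s.val ∩ Finset.Icc 1 k = {j} := by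
    intro i j hj
    have hjk := Finset.mem_Icc.1 hj
    set jf : Fin k := ⟨j - 1, by omega⟩ with hjf
    rcases hdom (Sum.inr (Sum.inl (i, jf))) with hv | ⟨u, huD, hadj⟩
    · exact absurd hv (hnoAJ i jf)
    · rw [dsAdj_iff] at hadj
      obtain ⟨hne, hrel | hrel⟩ := hadj
      · match u with
        | Sum.inl (i', s) =>
          obtain ⟨hii, hs⟩ := hrel
          subst hii
          refine ⟨s, Finset.mem_filter.2 ⟨Finset.mem_univ _, huD⟩, ?_⟩
          rw [hs]
          congr 1
          simp only [hjf]
          omega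
        | Sum.inr (Sum.inl p) => exact absurd hrel not_false
        | Sum.inr (Sum.inr (Sum.inl p)) => exact absurd hrel not_false
        | Sum.inr (Sum.inr (Sum.inr (Sum.inl p))) => exact absurd hrel not_false
        | Sum.inr (Sum.inr (Sum.inr (Sum.inr p))) => exact absurd hrel not_false
      · exact absurd hrel not_false
  -- domination of the b-hat vertices
  have h_bhat : ∀ (ib : Fin (m - 1)) (t : ↥(PP k)),
      (∀ i : Fin m, (i : ℕ) = (ib : ℕ) + 1 → ∀ s ∈ Ai i, Even ((s.val ∩ t.val).card)) →
      t ∈ Bi ib := by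
    intro ib t hev
    rcases hdom (Sum.inr (Sum.inr (Sum.inr (Sum.inl (ib, t))))) with hv | ⟨u, huD, hadj⟩
    · exact absurd hv (hnoBH ib t)
    · rw [dsAdj_iff] at hadj
      obtain ⟨hne, hrel | hrel⟩ := hadj
      · match u, hrel with
        | Sum.inl (i', sv), hrel =>
          obtain ⟨hii, hodd⟩ := hrel
          exact absurd hodd (Nat.not_odd_iff_even.2
            (hev i' hii sv (Finset.mem_filter.2 ⟨Finset.mem_univ _, huD⟩)))
        | Sum.inr (Sum.inl p), hrel => exact absurd hrel not_false
        | Sum.inr (Sum.inr (Sum.inl (ib', t'))), hrel =>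
          obtain ⟨h1, h2⟩ := hrel
          rw [h1, h2] at huD
          exact Finset.mem_filter.2 ⟨Finset.mem_univ _, huD⟩
        | Sum.inr (Sum.inr (Sum.inr (Sum.inl p))), hrel => exact absurd hrel not_false
        | Sum.inr (Sum.inr (Sum.inr (Sum.inr p))), hrel => exact absurd hrel not_false
      · exact absurd hrel not_false
  -- domination of the b vertices
  have h_b : ∀ (ib : Fin (m - 1)) (t : ↥(PP k)), t ∉ Bi ib →
      ∃ i : Fin m, (i : ℕ) = (ib : ℕ) ∧ ∃ s ∈ Ai i, Odd ((s.val ∩ t.val).card) := by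
    intro ib t htB
    rcases hdom (Sum.inr (Sum.inr (Sum.inl (ib, t)))) with hv | ⟨u, huD, hadj⟩
    · exact absurd (show t ∈ Bi ib from Finset.mem_filter.2 ⟨Finset.mem_univ _, hv⟩) htB
    · rw [dsAdj_iff] at hadj
      obtain ⟨hne, hrel | hrel⟩ := hadj
      · match u, hrel with
        | Sum.inl (i', sv), hrel =>
          obtain ⟨hii, hodd⟩ := hrel
          exact ⟨i', hii, sv, Finset.mem_filter.2 ⟨Finset.mem_univ _, huD⟩, hodd⟩
        | Sum.inr (Sum.inl p), hrel => exact absurd hrel not_false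
        | Sum.inr (Sum.inr (Sum.inl p)), hrel => exact absurd hrel not_false
        | Sum.inr (Sum.inr (Sum.inr (Sum.inl p))), hrel => exact absurd hrel not_false
        | Sum.inr (Sum.inr (Sum.inr (Sum.inr p))), hrel => exact absurd hrel not_false
      · match u, hrel with
        | Sum.inl p, hrel => exact absurd hrel not_false
        | Sum.inr (Sum.inl p), hrel => exact absurd hrel not_false
        | Sum.inr (Sum.inr (Sum.inl p)), hrel => exact absurd hrel not_false
        | Sum.inr (Sum.inr (Sum.inr (Sum.inl (ib', t')))), hrel =>
          obtain ⟨h1, h2⟩ := hrel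
          rw [← h1, ← h2] at huD
          exact absurd huD (hnoBH ib t)
        | Sum.inr (Sum.inr (Sum.inr (Sum.inr p))), hrel => exact absurd hrel not_false
  -- domination of the c vertices
  have h_c : ∀ i : Fin m, i ∉ Ci → ∃ s ∈ Ai i, ∃ q, memSLit k (C i q) s.val := by
    intro i hiC
    rcases hdom (Sum.inr (Sum.inr (Sum.inr (Sum.inr i)))) with hv | ⟨u, huD, hadj⟩
    · exact absurd (show i ∈ Ci from Finset.mem_filter.2 ⟨Finset.mem_univ _, hv⟩) hiC
    · rw [dsAdj_iff] at hadj
      obtain ⟨hne, hrel | hrel⟩ := hadj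
      · match u, hrel with
        | Sum.inl p, hrel => exact absurd hrel not_false
        | Sum.inr (Sum.inl p), hrel => exact absurd hrel not_false
        | Sum.inr (Sum.inr (Sum.inl p)), hrel => exact absurd hrel not_false
        | Sum.inr (Sum.inr (Sum.inr (Sum.inl p))), hrel => exact absurd hrel not_false
        | Sum.inr (Sum.inr (Sum.inr (Sum.inr p))), hrel => exact absurd hrel not_false
      · match u, hrel with
        | Sum.inl (i', sv), hrel =>
          obtain ⟨hii, q, hq⟩ := hrel
          subst hii
          exact ⟨sv, Finset.mem_filter.2 ⟨Finset.mem_univ _, huD⟩, q, hq⟩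
        | Sum.inr (Sum.inl p), hrel => exact absurd hrel not_false
        | Sum.inr (Sum.inr (Sum.inl p)), hrel => exact absurd hrel not_false
        | Sum.inr (Sum.inr (Sum.inr (Sum.inl p))), hrel => exact absurd hrel not_false
        | Sum.inr (Sum.inr (Sum.inr (Sum.inr p))), hrel => exact absurd hrel not_false
  -- each layer has at least k vertices
  have hcard_ge : ∀ i : Fin m, k ≤ (Ai i).card := by
    intro i
    have himg : Finset.Icc 1 k ⊆ (Ai i).image fun s => (s.val ∩ Finset.Icc 1 k).sum id := by
      intro j hj
      obtain ⟨s, hs, hsK⟩ := h_aij i j hj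
      refine Finset.mem_image.2 ⟨s, hs, ?_⟩
      rw [hsK, Finset.sum_singleton]
      rfl
    calc k = (Finset.Icc 1 k).card := by rw [Nat.card_Icc]; omega
    _ ≤ ((Ai i).image fun s => (s.val ∩ Finset.Icc 1 k).sum id).card :=
        Finset.card_le_card himg
    _ ≤ (Ai i).card := Finset.card_image_le
  -- index shifting maps
  set fsucc : Fin (m - 1) → Fin m :=
    (fun i' => ⟨i'.val + 1, by have := i'.isLt; omega⟩) with hfsucc
  set fcast : Fin (m - 1) → Fin m :=
    (fun i' => ⟨i'.val, by have := i'.isLt; omega⟩) with hfcast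
  -- nice layers
  have hnice : ∀ i : Fin m, (Ai i).card = k → ∃ T, NiceT k T ∧
      (Ai i).image Subtype.val = (Finset.Icc 1 k).image (sOf T) :=
    fun i hcard => exists_niceT (Ai i) (h_aij i) hcard
  have htrans : ∀ (i : Fin m) (T : ℕ → Finset ℕ),
      (Ai i).image Subtype.val = (Finset.Icc 1 k).image (sOf T) →
      ∀ t : Finset ℕ, ((∀ s ∈ Ai i, Even ((s.val ∩ t).card)) ↔
        (∀ j ∈ Finset.Icc 1 k, Even ((sOf T j ∩ t).card))) := by
    intro i T himg t
    constructor
    · intro h j hj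
      have hmem : sOf T j ∈ (Ai i).image Subtype.val := by
        rw [himg]; exact Finset.mem_image_of_mem _ hj
      obtain ⟨s, hs, hval⟩ := Finset.mem_image.1 hmem
      rw [← hval]; exact h s hs
    · intro h s hs
      have hmem : s.val ∈ (Finset.Icc 1 k).image (sOf T) := by
        rw [← himg]; exact Finset.mem_image_of_mem _ hs
      obtain ⟨j, hj, hval⟩ := Finset.mem_image.1 hmem
      rw [← hval]; exact h j hj
  have hOB : ∀ T0 : ℕ → Finset ℕ, NiceT k T0 →
      (Finset.univ.filter fun t : ↥(PP k) => t.val ∈ orthSet k T0).card = 2 ^ k := by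
    intro T0 hT0
    rw [← orth_card hT0]
    refine Finset.card_bij (fun t _ => t.val) (fun t ht => (Finset.mem_filter.1 ht).2)
      (fun t1 h1 t2 h2 h => Subtype.ext h) (fun b hb => ?_)
    refine ⟨⟨b, Finset.mem_powerset.2 (mem_orthSet.1 hb).1⟩,
      Finset.mem_filter.2 ⟨Finset.mem_univ _, hb⟩, rfl⟩
  -- the per-layer lower bound
  have hbsub : ∀ (i' : Fin (m - 1)) (T0 : ℕ → Finset ℕ),
      (Ai (fsucc i')).image Subtype.val = (Finset.Icc 1 k).image (sOf T0) →
      (Finset.univ.filter fun t : ↥(PP k) => t.val ∈ orthSet k T0) ⊆ Bi i' := by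
    intro i' T0 himg0 t ht
    have hto := (Finset.mem_filter.1 ht).2
    rw [mem_orthSet] at hto
    refine h_bhat i' t (fun i hi s hs => ?_)
    have hieq : i = fsucc i' := Fin.ext (by rw [hfsucc]; exact hi)
    rw [hieq] at hs
    exact (htrans _ _ himg0 t.val).2 hto.2 s hs
  have hck : 2 ^ k < 2 ^ (2 * k) + 2 := by
    have := Nat.pow_le_pow_right (by norm_num : 1 ≤ 2) (by omega : k ≤ 2 * k)
    omega
  have hq : ∀ i' : Fin (m - 1),
      2 ^ k ≤ (2 ^ (2 * k) + 2) * ((Ai (fsucc i')).card - k) + (Bi i').card := by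
    intro i'
    by_cases hcd : (Ai (fsucc i')).card = k
    · obtain ⟨T0, hT0, himg0⟩ := hnice _ hcd
      calc 2 ^ k = (Finset.univ.filter fun t : ↥(PP k) => t.val ∈ orthSet k T0).card :=
            (hOB T0 hT0).symm
      _ ≤ (Bi i').card := Finset.card_le_card (hbsub i' T0 himg0)
      _ ≤ _ := Nat.le_add_left _ _
    · have h1 : k + 1 ≤ (Ai (fsucc i')).card := lt_of_le_of_ne (hcard_ge _) (Ne.symm hcd)
      have h2 : (2 ^ (2 * k) + 2) * 1 ≤ (2 ^ (2 * k) + 2) * ((Ai (fsucc i')).card - k) :=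
        Nat.mul_le_mul_left _ (by omega)
      omega
  -- assemble the count
  have hsplitA : ∑ i : Fin m, (2 ^ (2 * k) + 2) * (Ai i).card =
      (2 ^ (2 * k) + 2) * (Ai ⟨0, hm⟩).card +
        ∑ i' : Fin (m - 1), (2 ^ (2 * k) + 2) * (Ai (fsucc i')).card :=
    sum_fin_split hm _
  have hsum_layer : ∀ i' : Fin (m - 1),
      (2 ^ (2 * k) + 2) * (Ai (fsucc i')).card + (Bi i').card =
        (2 ^ (2 * k) + 2) * k +
          ((2 ^ (2 * k) + 2) * ((Ai (fsucc i')).card - k) + (Bi i').card) := by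
    intro i'
    have h1 : (Ai (fsucc i')).card = k + ((Ai (fsucc i')).card - k) :=
      (Nat.add_sub_cancel' (hcard_ge _)).symm
    calc (2 ^ (2 * k) + 2) * (Ai (fsucc i')).card + (Bi i').card
        = (2 ^ (2 * k) + 2) * (k + ((Ai (fsucc i')).card - k)) + (Bi i').card := by
          rw [← h1]
      _ = _ := by ring
  have hmid : (∑ i' : Fin (m - 1), (2 ^ (2 * k) + 2) * (Ai (fsucc i')).card) +
      ∑ i' : Fin (m - 1), (Bi i').card =
      (2 ^ (2 * k) + 2) * k * (m - 1) + ∑ i' : Fin (m - 1),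
        ((2 ^ (2 * k) + 2) * ((Ai (fsucc i')).card - k) + (Bi i').card) := by
    rw [← Finset.sum_add_distrib, Finset.sum_congr rfl (fun i' _ => hsum_layer i'),
      Finset.sum_add_distrib, Finset.sum_const, Finset.card_univ, Fintype.card_fin,
      smul_eq_mul]
    ring
  have hconstsum : ∑ _i' : Fin (m - 1), 2 ^ k = 2 ^ k * (m - 1) := by
    rw [Finset.sum_const, Finset.card_univ, Fintype.card_fin, smul_eq_mul]
    ring
  have hqsum_ge : 2 ^ k * (m - 1) ≤ ∑ i' : Fin (m - 1),
      ((2 ^ (2 * k) + 2) * ((Ai (fsucc i')).card - k) + (Bi i').card) := by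
    rw [← hconstsum]
    exact Finset.sum_le_sum (fun i' _ => hq i')
  have hA0 : (2 ^ (2 * k) + 2) * k ≤ (2 ^ (2 * k) + 2) * (Ai ⟨0, hm⟩).card :=
    Nat.mul_le_mul_left _ (hcard_ge _)
  have hPsplit : (2 ^ (2 * k) + 2) * k * m =
      (2 ^ (2 * k) + 2) * k * (m - 1) + (2 ^ (2 * k) + 2) * k := by
    obtain ⟨M, rfl⟩ : ∃ M, m = M + 1 := ⟨m - 1, by omega⟩
    simp only [Nat.add_sub_cancel]
    ring
  have htotineq : (2 ^ (2 * k) + 2) * (Ai ⟨0, hm⟩).card +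
      ((2 ^ (2 * k) + 2) * k * (m - 1) + ∑ i' : Fin (m - 1),
        ((2 ^ (2 * k) + 2) * ((Ai (fsucc i')).card - k) + (Bi i').card)) + Ci.card ≤
      (2 ^ (2 * k) + 2) * k * m + 2 ^ k * (m - 1) := by
    rw [← hmid]
    calc (2 ^ (2 * k) + 2) * (Ai ⟨0, hm⟩).card +
        ((∑ i' : Fin (m - 1), (2 ^ (2 * k) + 2) * (Ai (fsucc i')).card) +
          ∑ i' : Fin (m - 1), (Bi i').card) + Ci.card
        = ∑ v ∈ D, natW k m v := by rw [hdecomp, hsplitA]; ring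
    _ ≤ _ := hWnat
  -- extract the exact values
  have hγ0 : Ci.card = 0 := by
    have h1 : Ci.card ≤ 0 := by linarith
    omega
  have hA0eq : (2 ^ (2 * k) + 2) * (Ai ⟨0, hm⟩).card = (2 ^ (2 * k) + 2) * k := by
    have h1 : (2 ^ (2 * k) + 2) * (Ai ⟨0, hm⟩).card ≤ (2 ^ (2 * k) + 2) * k := by linarith
    exact le_antisymm h1 hA0
  have hα0 : (Ai ⟨0, hm⟩).card = k :=
    Nat.eq_of_mul_eq_mul_left (by positivity) hA0eq
  have hSeq : ∑ i' : Fin (m - 1),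
      ((2 ^ (2 * k) + 2) * ((Ai (fsucc i')).card - k) + (Bi i').card) = 2 ^ k * (m - 1) := by
    have h1 : ∑ i' : Fin (m - 1),
        ((2 ^ (2 * k) + 2) * ((Ai (fsucc i')).card - k) + (Bi i').card) ≤ 2 ^ k * (m - 1) := by
      linarith
    exact le_antisymm h1 hqsum_ge
  have hqeach : ∀ i' : Fin (m - 1),
      (2 ^ (2 * k) + 2) * ((Ai (fsucc i')).card - k) + (Bi i').card = 2 ^ k := by
    have heq := (Finset.sum_eq_sum_iff_of_le (fun i' (_ : i' ∈ Finset.univ) => hq i')).1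
      (by rw [hconstsum, hSeq])
    exact fun i' => (heq i' (Finset.mem_univ _)).symm
  have hαsucc : ∀ i' : Fin (m - 1), (Ai (fsucc i')).card = k ∧ (Bi i').card = 2 ^ k := by
    intro i'
    have hqi := hqeach i'
    have hd0 : (Ai (fsucc i')).card - k = 0 := by
      by_contra hd
      have h1 : 1 ≤ (Ai (fsucc i')).card - k := by omega
      have h2 : (2 ^ (2 * k) + 2) * 1 ≤
          (2 ^ (2 * k) + 2) * ((Ai (fsucc i')).card - k) := Nat.mul_le_mul_left _ h1
      omega
    have := hcard_ge (fsucc i')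
    constructor
    · omega
    · rw [hd0] at hqi; omega
  have hαk : ∀ i : Fin m, (Ai i).card = k := by
    intro i
    by_cases h0 : (i : ℕ) = 0
    · have : i = ⟨0, hm⟩ := Fin.ext h0
      rw [this]; exact hα0
    · have h1 : i.val - 1 < m - 1 := by have := i.isLt; omega
      have : i = fsucc ⟨i.val - 1, h1⟩ := Fin.ext (by rw [hfsucc]; simp; omega)
      rw [this]; exact (hαsucc _).1
  -- choose nice families for all layers
  have hTex : ∀ i : Fin m, ∃ T, NiceT k T ∧
      (Ai i).image Subtype.val = (Finset.Icc 1 k).image (sOf T) :=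
    fun i => hnice i (hαk i)
  choose T hTnice hTimg using hTex
  -- B_i is exactly the orthogonal set of the next layer
  have hBeq : ∀ (i' : Fin (m - 1)) (t : ↥(PP k)),
      t ∈ Bi i' ↔ t.val ∈ orthSet k (T (fsucc i')) := by
    intro i'
    have hsub := hbsub i' (T (fsucc i')) (hTimg _)
    have heq := Finset.eq_of_subset_of_card_le hsub
      (by rw [hOB _ (hTnice (fsucc i')), (hαsucc i').2])
    intro t
    rw [← heq, Finset.mem_filter]
    simp
  -- transfer between consecutive layers
  have hstep : ∀ i' : Fin (m - 1), ∀ j ∈ Finset.Icc 1 k,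
      T (fcast i') j = T (fsucc i') j := by
    intro i' j hj
    refine transferT (hTnice _) (hTnice _) ?_ hj
    intro t ht hev
    have htP : t ∈ PP k := Finset.mem_powerset.2 ht
    have hevA : ∀ s ∈ Ai (fcast i'), Even ((s.val ∩ t).card) :=
      (htrans _ _ (hTimg _) t).2 hev
    have htB : (⟨t, htP⟩ : ↥(PP k)) ∈ Bi i' := by
      by_contra htB
      obtain ⟨i, hi, s, hsA, hodd⟩ := h_b i' ⟨t, htP⟩ htB
      have hieq : i = fcast i' := Fin.ext (by rw [hfcast]; exact hi)
      rw [hieq] at hsA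
      exact (Nat.not_odd_iff_even.2 (hevA s hsA)) hodd
    have h2 := (hBeq i' ⟨t, htP⟩).1 htB
    rw [mem_orthSet] at h2
    exact h2.2
  -- all layers carry the same data
  have hTeq : ∀ (r : ℕ) (hr : r < m), ∀ j ∈ Finset.Icc 1 k,
      T ⟨r, hr⟩ j = T ⟨0, hm⟩ j := by
    intro r
    induction r with
    | zero => intro hr j hj; rfl
    | succ r ih =>
      intro hr j hj
      have hr' : r < m - 1 := by omega
      have h1 := hstep ⟨r, hr'⟩ j hj
      have e1 : fcast ⟨r, hr'⟩ = ⟨r, by omega⟩ := Fin.ext (by rw [hfcast])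
      have e2 : fsucc ⟨r, hr'⟩ = ⟨r + 1, hr⟩ := Fin.ext (by rw [hfsucc])
      rw [e1, e2] at h1
      rw [← h1]
      exact ih (by omega) j hj
  -- the satisfying assignment
  refine ⟨fun i0 j0 => decide (j0 ∈ T ⟨0, hm⟩ i0), fun p => ?_⟩
  have hpC : p ∉ Ci := by
    have hCe : Ci = ∅ := Finset.card_eq_zero.1 hγ0
    rw [hCe]
    exact Finset.notMem_empty p
  obtain ⟨s, hsA, q, hq1, hq2⟩ := h_c p hpC
  refine ⟨q, ?_⟩
  obtain ⟨hi0, hj0⟩ := hC p q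
  have hsval : s.val ∈ (Finset.Icc 1 k).image (sOf (T p)) := by
    rw [← hTimg p]
    exact Finset.mem_image_of_mem _ hsA
  obtain ⟨j, hj, hval⟩ := Finset.mem_image.1 hsval
  have hjj : j = (C p q).1.1 := by
    have h1 := sOf_inter_K (hTnice p) hj
    rw [hval, hq1] at h1
    exact (Finset.singleton_injective h1).symm
  have hTp : ∀ j0 ∈ Finset.Icc 1 k, T p j0 = T ⟨0, hm⟩ j0 := by
    have h1 := hTeq p.val p.isLt
    rwa [Fin.eta] at h1
  have hne : (C p q).1.2 ≠ (C p q).1.1 := by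
    have h1 := Finset.mem_Icc.1 hi0
    have h2 := Finset.mem_Icc.1 hj0
    omega
  have hmem_iff : (C p q).1.2 ∈ s.val ↔ (C p q).1.2 ∈ T ⟨0, hm⟩ (C p q).1.1 := by
    rw [← hval, hjj, sOf, Finset.mem_insert, hTp _ hi0]
    simp [hne]
  rw [litSat]
  rcases hb : (C p q).2 with _ | _
  · rw [hb] at hq2
    simp only [Bool.false_eq_true, if_false] at hq2
    simp only [decide_eq_false_iff_not]
    exact fun h => hq2 (hmem_iff.2 h)
  · rw [hb] at hq2
    simp only [if_pos rfl] at hq2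
    simp only [decide_eq_true_eq]
    exact hmem_iff.1 hq2

/-- the 3-CNF formula `φ` (with clauses `C p = (C p 0, C p 1, C p 2)`,
`p ∈ [m]`, over the variables `v_{i,j}`, `i ∈ [k]`, `j ∈ [k+1,2k]`) is satisfiable iff
the weighted graph of the dominating-set reduction admits a dominating set of total
weight at most `(2^{2k}+2)·k·m + 2^k·(m−1)`. -/
theorem satisfiable_iff_domSet_weight (k m : ℕ) (hk : 1 ≤ k) (hm : 1 ≤ m)
    (C : Fin m → Fin 3 → Lit) (hC : ∀ p q, LitOK k (C p q)) :
    (∃ f : ℕ → ℕ → Bool, ∀ p, ∃ q, litSat f (C p q)) ↔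
      ∃ D : Finset (DSVertex k m), IsDomFinset (DSGraph k m C) D ∧
        ∑ v ∈ D, dsWeight k m v ≤
          (((2 ^ (2 * k) + 2) * k * m + 2 ^ k * (m - 1) : ℕ) : WithTop ℕ) := by
  constructor
  · rintro ⟨f, hf⟩
    exact forward hk hm C hC f hf
  · rintro ⟨D, hdom, hW⟩
    exact backward hk hm C hC D hdom hW
end

section
/- Let k ≥ 1, m ≥ 1, let φ be a 3-CNF formula with clauses C_1,…,C_m over the variables {v_{i,j} : i ∈ [k], j ∈ [k+1,2k]}, and let G be the graph of the dominating-set reduction. Then there exists an enumeration of V(G) of width at most 4k + 2; in particular, the linear rank-width of G is at most 4k + 2. -/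
open scoped Classical in
/-- The cut-rank of the cut `(X, V ∖ X)` in a finite simple graph `G`: the `𝔽₂`-rank of
the 0-1 matrix with rows indexed by `X`, columns by its complement, and entry `(x,y)`
equal to `1` iff `xy ∈ E(G)`. -/
noncomputable def cutRank {V : Type*} [Fintype V] [DecidableEq V]
    (G : SimpleGraph V) (X : Finset V) : ℕ :=
  (Matrix.of fun (x : ↥X) (y : ↥(Xᶜ)) =>
    if G.Adj x.val y.val then (1 : ZMod 2) else 0).rank

/-- The prefix `{v_1, …, v_p}` of the enumeration `e` of the vertices. -/
def enumPrefix {V : Type*} [Fintype V] [DecidableEq V]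
    (e : Fin (Fintype.card V) ≃ V) (p : ℕ) : Finset V :=
  (Finset.univ.filter fun i : Fin (Fintype.card V) => (i : ℕ) < p).image e

namespace DSAux

open Finset

lemma lex3_le {a b c a' b' c' : ℕ} :
    (toLex (a, toLex (b, c)) ≤ toLex (a', toLex (b', c'))) ↔
      (a < a' ∨ (a = a' ∧ (b < b' ∨ (b = b' ∧ c ≤ c')))) := by
  simp [Prod.Lex.le_iff, Prod.Lex.lt_iff]

lemma lex3_lt {a b c a' b' c' : ℕ} :
    (toLex (a, toLex (b, c)) < toLex (a', toLex (b', c'))) ↔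
      (a < a' ∨ (a = a' ∧ (b < b' ∨ (b = b' ∧ c < c')))) := by
  simp [Prod.Lex.lt_iff]

lemma lex3_eq {a b c a' b' c' : ℕ} :
    (toLex (a, toLex (b, c)) = toLex (a', toLex (b', c'))) ↔
      (a = a' ∧ b = b' ∧ c = c') := by
  simp [Prod.ext_iff]

variable (k m : ℕ)

/-- class of a set `s` (the unique element of `s ∩ [k]`, when it exists). -/
def cls (s : Finset ℕ) : ℕ := (s ∩ Finset.Icc 1 k).sum id

lemma cls_of_inter_eq {s : Finset ℕ} {c : ℕ} (h : s ∩ Finset.Icc 1 k = {c}) :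
    cls k s = c := by simp [cls, h]

lemma SS_inter_eq {s : Finset ℕ} (hs : s ∈ SS k) :
    s ∩ Finset.Icc 1 k = {cls k s} := by
  obtain ⟨c, hc⟩ := Finset.card_eq_one.mp (Finset.mem_filter.mp hs).2
  rw [cls_of_inter_eq k hc]; exact hc

lemma cls_mem {s : Finset ℕ} (hs : s ∈ SS k) : cls k s ∈ Finset.Icc 1 k := by
  have h := SS_inter_eq k hs
  have : cls k s ∈ s ∩ Finset.Icc 1 k := by rw [h]; exact Finset.mem_singleton_self _
  exact (Finset.mem_inter.mp this).2

lemma SS_subset {s : Finset ℕ} (hs : s ∈ SS k) : s ⊆ Finset.Icc 1 (2 * k) :=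
  Finset.mem_powerset.mp (Finset.mem_filter.mp hs).1

lemma PP_subset {t : Finset ℕ} (ht : t ∈ PP k) : t ⊆ Finset.Icc 1 (2 * k) :=
  Finset.mem_powerset.mp ht

/-- the sorting key -/
def key : DSVertex k m → ℕ ×ₗ ℕ ×ₗ ℕ
  | Sum.inl (i, s) =>
      toLex (3 * (i : ℕ) + 1, toLex (cls k s.val, 1 + Encodable.encode s.val))
  | Sum.inr (Sum.inl (i, j)) => toLex (3 * (i : ℕ) + 1, toLex ((j : ℕ) + 1, 0))
  | Sum.inr (Sum.inr (Sum.inl (ib, t))) =>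
      toLex (3 * (ib : ℕ) + 2, toLex (Encodable.encode t.val, 0))
  | Sum.inr (Sum.inr (Sum.inr (Sum.inl (ib, t)))) =>
      toLex (3 * (ib : ℕ) + 2, toLex (Encodable.encode t.val, 1))
  | Sum.inr (Sum.inr (Sum.inr (Sum.inr i))) => toLex (3 * (i : ℕ), toLex (0, 0))

lemma key_injective : Function.Injective (key k m) := by
  intro u v h
  rcases u with ⟨i, s⟩ | ⟨i, j⟩ | ⟨ib, t⟩ | ⟨ib, t⟩ | i <;>
    rcases v with ⟨i', s'⟩ | ⟨i', j'⟩ | ⟨ib', t'⟩ | ⟨ib', t'⟩ | i' <;>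
    simp only [key, lex3_eq] at h <;>
    first | (exfalso; omega) | skip
  · obtain ⟨h1, h2, h3⟩ := h
    have hi : i = i' := Fin.ext (by omega)
    have hs : s = s' := Subtype.ext (Encodable.encode_injective (by omega))
    rw [hi, hs]
  · obtain ⟨h1, h2, -⟩ := h
    have hi : i = i' := Fin.ext (by omega)
    have hj : j = j' := Fin.ext (by omega)
    rw [hi, hj]
  · obtain ⟨h1, h2, -⟩ := h
    have hi : ib = ib' := Fin.ext (by omega)
    have ht : t = t' := Subtype.ext (Encodable.encode_injective h2)
    rw [hi, ht]
  · obtain ⟨h1, h2, -⟩ := h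
    have hi : ib = ib' := Fin.ext (by omega)
    have ht : t = t' := Subtype.ext (Encodable.encode_injective h2)
    rw [hi, ht]
  · rw [show i = i' from Fin.ext (by omega)]


end DSAux
namespace DSAux2
open Finset DSAux

variable (k m : ℕ) (C : Fin m → Fin 3 → Lit)

/-- clique edges (within a block, among a-type vertices) and `b–b̂` matching edges -/
def rel1 : DSVertex k m → DSVertex k m → Prop
  | Sum.inl (i, s), Sum.inl (i', s') =>
      i = i' ∧ s.val ∩ Finset.Icc 1 k = s'.val ∩ Finset.Icc 1 k
  | Sum.inl (i, s), Sum.inr (Sum.inl (i', j)) =>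
      i = i' ∧ s.val ∩ Finset.Icc 1 k = {(j : ℕ) + 1}
  | Sum.inr (Sum.inl (i', j)), Sum.inl (i, s) =>
      i = i' ∧ s.val ∩ Finset.Icc 1 k = {(j : ℕ) + 1}
  | Sum.inr (Sum.inr (Sum.inl (ib, t))), Sum.inr (Sum.inr (Sum.inr (Sum.inl (ib', t')))) =>
      ib = ib' ∧ t = t'
  | Sum.inr (Sum.inr (Sum.inr (Sum.inl (ib', t')))), Sum.inr (Sum.inr (Sum.inl (ib, t))) =>
      ib = ib' ∧ t = t'
  | _, _ => False

/-- `c`–`a` edges -/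
def rel2 : DSVertex k m → DSVertex k m → Prop
  | Sum.inr (Sum.inr (Sum.inr (Sum.inr i))), Sum.inl (i', s) =>
      i = i' ∧ ∃ q : Fin 3, memSLit k (C i q) s.val
  | Sum.inl (i', s), Sum.inr (Sum.inr (Sum.inr (Sum.inr i))) =>
      i = i' ∧ ∃ q : Fin 3, memSLit k (C i q) s.val
  | _, _ => False

/-- `a^i`–`b^i` edges -/
def rel3 : DSVertex k m → DSVertex k m → Prop
  | Sum.inl (i, s), Sum.inr (Sum.inr (Sum.inl (ib, t))) =>
      (i : ℕ) = (ib : ℕ) ∧ Odd (s.val ∩ t.val).card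
  | Sum.inr (Sum.inr (Sum.inl (ib, t))), Sum.inl (i, s) =>
      (i : ℕ) = (ib : ℕ) ∧ Odd (s.val ∩ t.val).card
  | _, _ => False

/-- `b̂^i`–`a^{i+1}` edges -/
def rel4 : DSVertex k m → DSVertex k m → Prop
  | Sum.inl (i, s), Sum.inr (Sum.inr (Sum.inr (Sum.inl (ib, t)))) =>
      (i : ℕ) = (ib : ℕ) + 1 ∧ Odd (s.val ∩ t.val).card
  | Sum.inr (Sum.inr (Sum.inr (Sum.inl (ib, t)))), Sum.inl (i, s) =>
      (i : ℕ) = (ib : ℕ) + 1 ∧ Odd (s.val ∩ t.val).card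
  | _, _ => False

lemma dsRel_iff (x y : DSVertex k m) :
    (dsRel k m C x y ∨ dsRel k m C y x) ↔
      (rel1 k m x y ∨ rel2 k m C x y ∨ rel3 k m x y ∨ rel4 k m x y) := by
  rcases x with ⟨i, s⟩ | ⟨i, j⟩ | ⟨ib, t⟩ | ⟨ib, t⟩ | i <;>
    rcases y with ⟨i', s'⟩ | ⟨i', j'⟩ | ⟨ib', t'⟩ | ⟨ib', t'⟩ | i' <;>
    simp [dsRel, rel1, rel2, rel3, rel4] <;> tauto

lemma rel12 (x y : DSVertex k m) : rel1 k m x y → ¬ rel2 k m C x y := by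
  rcases x with ⟨i, s⟩ | ⟨i, j⟩ | ⟨ib, t⟩ | ⟨ib, t⟩ | i <;>
    rcases y with ⟨i', s'⟩ | ⟨i', j'⟩ | ⟨ib', t'⟩ | ⟨ib', t'⟩ | i' <;>
    simp [rel1, rel2]

lemma rel13 (x y : DSVertex k m) : rel1 k m x y → ¬ rel3 k m x y := by
  rcases x with ⟨i, s⟩ | ⟨i, j⟩ | ⟨ib, t⟩ | ⟨ib, t⟩ | i <;>
    rcases y with ⟨i', s'⟩ | ⟨i', j'⟩ | ⟨ib', t'⟩ | ⟨ib', t'⟩ | i' <;>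
    simp [rel1, rel3]

lemma rel14 (x y : DSVertex k m) : rel1 k m x y → ¬ rel4 k m x y := by
  rcases x with ⟨i, s⟩ | ⟨i, j⟩ | ⟨ib, t⟩ | ⟨ib, t⟩ | i <;>
    rcases y with ⟨i', s'⟩ | ⟨i', j'⟩ | ⟨ib', t'⟩ | ⟨ib', t'⟩ | i' <;>
    simp [rel1, rel4]

lemma rel23 (x y : DSVertex k m) : rel2 k m C x y → ¬ rel3 k m x y := by
  rcases x with ⟨i, s⟩ | ⟨i, j⟩ | ⟨ib, t⟩ | ⟨ib, t⟩ | i <;>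
    rcases y with ⟨i', s'⟩ | ⟨i', j'⟩ | ⟨ib', t'⟩ | ⟨ib', t'⟩ | i' <;>
    simp [rel2, rel3]

lemma rel24 (x y : DSVertex k m) : rel2 k m C x y → ¬ rel4 k m x y := by
  rcases x with ⟨i, s⟩ | ⟨i, j⟩ | ⟨ib, t⟩ | ⟨ib, t⟩ | i <;>
    rcases y with ⟨i', s'⟩ | ⟨i', j'⟩ | ⟨ib', t'⟩ | ⟨ib', t'⟩ | i' <;>
    simp [rel2, rel4]

lemma rel34 (x y : DSVertex k m) : rel3 k m x y → ¬ rel4 k m x y := by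
  rcases x with ⟨i, s⟩ | ⟨i, j⟩ | ⟨ib, t⟩ | ⟨ib, t⟩ | i <;>
    rcases y with ⟨i', s'⟩ | ⟨i', j'⟩ | ⟨ib', t'⟩ | ⟨ib', t'⟩ | i' <;>
    simp [rel3, rel4]

end DSAux2

open Finset

lemma zmod2_odd {n : ℕ} (h : Odd n) : (n : ZMod 2) = 1 := by
  rw [← ZMod.natCast_mod, Nat.odd_iff.mp h]; rfl

lemma zmod2_even {n : ℕ} (h : ¬ Odd n) : (n : ZMod 2) = 0 := by
  rw [← ZMod.natCast_mod, Nat.not_odd_iff.mp h]; rfl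

lemma parity_sum (k : ℕ) (s t : Finset ℕ) (hs : s ⊆ Finset.Icc 1 (2 * k))
    (ht : t ⊆ Finset.Icc 1 (2 * k)) :
    (∑ j : Fin (2 * k),
      (if (j : ℕ) + 1 ∈ s then (1 : ZMod 2) else 0) *
      (if (j : ℕ) + 1 ∈ t then (1 : ZMod 2) else 0)) = ((s ∩ t).card : ZMod 2) := by
  have h1 : ∀ j : Fin (2 * k),
      (if (j : ℕ) + 1 ∈ s then (1 : ZMod 2) else 0) *
      (if (j : ℕ) + 1 ∈ t then (1 : ZMod 2) else 0) =
      (if (j : ℕ) + 1 ∈ s ∩ t then (1 : ZMod 2) else 0) := by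
    intro j
    by_cases h1 : (j : ℕ) + 1 ∈ s <;> by_cases h2 : (j : ℕ) + 1 ∈ t <;>
      simp [h1, h2, Finset.mem_inter]
  rw [Finset.sum_congr rfl fun j _ => h1 j, Finset.sum_boole]
  congr 1
  apply Finset.card_bij (fun (j : Fin (2 * k)) (_ : j ∈ Finset.univ.filter
      fun j : Fin (2 * k) => (j : ℕ) + 1 ∈ s ∩ t) => (j : ℕ) + 1)
  · intro a ha; exact (Finset.mem_filter.mp ha).2
  · intro a ha b hb hab; exact Fin.ext (by omega)
  · intro a ha
    have h2 : a ∈ Finset.Icc 1 (2 * k) := hs (Finset.mem_inter.mp ha).1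
    simp only [Finset.mem_Icc] at h2
    refine ⟨⟨a - 1, by omega⟩, ?_, by simp; omega⟩
    simp only [Finset.mem_filter, Finset.mem_univ, true_and]
    simpa [Nat.sub_add_cancel h2.1] using ha

lemma rank_le_inner {I J R : Type} [Fintype I] [Fintype J] [Fintype R] [DecidableEq R]
    (A : Matrix I J (ZMod 2)) (B : Matrix I R (ZMod 2)) (C : Matrix R J (ZMod 2))
    (h : A = B * C) : A.rank ≤ Fintype.card R := by
  rw [h]
  exact (Matrix.rank_mul_le_left B C).trans (Matrix.rank_le_card_width B)

namespace DSAux3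
open Finset DSAux DSAux2

variable (k m : ℕ) (C : Fin m → Fin 3 → Lit) (X : Finset (DSVertex k m))

/-- `x` is an a-type vertex of block `i`, class `c` -/
def isA (i c : ℕ) : DSVertex k m → Prop
  | Sum.inl (i', s) => (i' : ℕ) = i ∧ s.val ∩ Finset.Icc 1 k = {c}
  | Sum.inr (Sum.inl (i', j)) => (i' : ℕ) = i ∧ (j : ℕ) + 1 = c
  | _ => False

lemma keyA {i c : ℕ} {x : DSVertex k m} (h : isA k m i c x) :
    ∃ d : ℕ, key k m x = toLex (3 * i + 1, toLex (c, d)) := by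
  rcases x with ⟨i', s⟩ | ⟨i', j⟩ | ⟨ib, t⟩ | ⟨ib, t⟩ | i' <;>
    simp only [isA] at h
  · obtain ⟨h1, h2⟩ := h
    exact ⟨1 + Encodable.encode s.val, by rw [key, h1, cls_of_inter_eq k h2]⟩
  · obtain ⟨h1, h2⟩ := h
    exact ⟨0, by rw [key, h1, h2]⟩

lemma relA {i c : ℕ} {x : DSVertex k m} (h : isA k m i c x) {i1 : Fin m}
    {s' : ↥(SS k)} (hi1 : (i1 : ℕ) = i) (hs' : s'.val ∩ Finset.Icc 1 k = {c}) :
    rel1 k m x (Sum.inl (i1, s')) := by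
  rcases x with ⟨i', s⟩ | ⟨i', j⟩ | ⟨ib, t⟩ | ⟨ib, t⟩ | i' <;>
    simp only [isA] at h
  · obtain ⟨h1, h2⟩ := h
    exact ⟨Fin.ext (by omega), by rw [h2, hs']⟩
  · obtain ⟨h1, h2⟩ := h
    exact ⟨Fin.ext (by omega), by rw [hs', h2]⟩

/-- analysis of a crossing `rel1`-edge: either an a-clique edge or a `b–b̂` edge -/
lemma stepA (hc : ∀ ⦃x y : DSVertex k m⦄, x ∈ X → y ∉ X → key k m x < key k m y)
    {x y1 : DSVertex k m} (hx : x ∈ X) (hy1 : y1 ∉ X) (h1 : rel1 k m x y1) :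
    (∃ i c, isA k m i c x ∧ ∃ (i1 : Fin m) (s1 : ↥(SS k)), (i1 : ℕ) = i ∧
        y1 = Sum.inl (i1, s1) ∧ s1.val ∩ Finset.Icc 1 k = {c}) ∨
    (∃ (ib : Fin (m - 1)) (t : ↥(PP k)),
        x = Sum.inr (Sum.inr (Sum.inl (ib, t))) ∧
        y1 = Sum.inr (Sum.inr (Sum.inr (Sum.inl (ib, t))))) := by
  rcases x with ⟨i, s⟩ | ⟨i, j⟩ | ⟨ib, t⟩ | ⟨ib, t⟩ | i <;>
    rcases y1 with ⟨i', s'⟩ | ⟨i', j'⟩ | ⟨ib', t'⟩ | ⟨ib', t'⟩ | i' <;>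
    simp only [rel1] at h1
  · -- a_s – a_s'
    obtain ⟨h1i, h1s⟩ := h1
    refine Or.inl ⟨(i : ℕ), cls k s.val, ⟨rfl, SS_inter_eq k s.2⟩, i', s',
      by rw [h1i], rfl, by rw [← h1s]; exact SS_inter_eq k s.2⟩
  · -- a_s – a^{i,j} : impossible (the a^{i,j} comes first)
    exfalso
    obtain ⟨h1i, h1s⟩ := h1
    have h := hc hx hy1
    simp only [key, cls_of_inter_eq k h1s, h1i, lex3_lt] at h
    omega
  · -- a^{i,j} – a_s'
    obtain ⟨h1i, h1s⟩ := h1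
    exact Or.inl ⟨(i : ℕ), (j : ℕ) + 1, ⟨rfl, rfl⟩, i', s', by rw [h1i], rfl, h1s⟩
  · -- b – b̂
    obtain ⟨h1i, h1t⟩ := h1
    exact Or.inr ⟨ib, t, rfl, by rw [h1i, h1t]⟩
  · -- b̂ – b : impossible
    exfalso
    obtain ⟨h1i, h1t⟩ := h1
    have h := hc hx hy1
    simp only [key, h1i, h1t, lex3_lt] at h
    omega

lemma L1 (hc : ∀ ⦃x y : DSVertex k m⦄, x ∈ X → y ∉ X → key k m x < key k m y)
    {x y y1 x2 : DSVertex k m} (hx : x ∈ X) (hy : y ∉ X) (hy1 : y1 ∉ X)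
    (hx2 : x2 ∈ X) (h1 : rel1 k m x y1) (h2 : rel1 k m x2 y) : rel1 k m x y := by
  rcases stepA k m X hc hx hy1 h1 with
      ⟨i, c, hxA, i1, s1, hi1, hy1eq, hs1⟩ | ⟨ib, t, hxeq, hy1eq⟩ <;>
    rcases stepA k m X hc hx2 hy h2 with
      ⟨i2, c2, hx2A, iy, sy, hiy, hyeq, hsy⟩ | ⟨ib2, t2, hx2eq, hyeq⟩
  · -- both a-type; show (i,c) = (i2,c2)
    obtain ⟨d, hd⟩ := keyA k m hxA
    obtain ⟨d2, hd2⟩ := keyA k m hx2A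
    have key_y1 : key k m y1 = toLex (3 * i + 1, toLex (c, 1 + Encodable.encode s1.val)) := by
      rw [hy1eq, key, hi1, cls_of_inter_eq k hs1]
    have key_y : key k m y = toLex (3 * i2 + 1, toLex (c2, 1 + Encodable.encode sy.val)) := by
      rw [hyeq, key, hiy, cls_of_inter_eq k hsy]
    have hic : i = i2 ∧ c = c2 := by
      have ha := hc hx2 hy1
      have hb := hc hx hy
      rw [key_y1, hd2, lex3_lt] at ha
      rw [key_y, hd, lex3_lt] at hb
      omega
    rw [hyeq]
    exact relA k m hxA (by omega) (by rw [hsy, hic.2])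
  · -- a-type vs b-pair: impossible
    exfalso
    obtain ⟨d, hd⟩ := keyA k m hxA
    have key_y1 : key k m y1 = toLex (3 * i + 1, toLex (c, 1 + Encodable.encode s1.val)) := by
      rw [hy1eq, key, hi1, cls_of_inter_eq k hs1]
    have ha := hc hx hy
    have hb := hc hx2 hy1
    rw [hyeq, key, hd, lex3_lt] at ha
    rw [hx2eq, key, key_y1, lex3_lt] at hb
    omega
  · -- b-pair vs a-type: impossible
    exfalso
    obtain ⟨d2, hd2⟩ := keyA k m hx2A
    have key_y : key k m y = toLex (3 * i2 + 1, toLex (c2, 1 + Encodable.encode sy.val)) := by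
      rw [hyeq, key, hiy, cls_of_inter_eq k hsy]
    have ha := hc hx hy
    have hb := hc hx2 hy1
    rw [hxeq, key, key_y, lex3_lt] at ha
    rw [hd2, hy1eq, key, lex3_lt] at hb
    omega
  · -- both b-pairs: they coincide
    have ha := hc hx hy
    have hb := hc hx2 hy1
    rw [hxeq, hyeq, key, key, lex3_lt] at ha
    rw [hx2eq, hy1eq, key, key, lex3_lt] at hb
    have ht : t = t2 := Subtype.ext (Encodable.encode_injective (by omega))
    have hib : ib = ib2 := Fin.ext (by omega)
    rw [hxeq, hyeq, ← hib, ← ht]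
    exact ⟨rfl, rfl⟩

lemma L2 (hc : ∀ ⦃x y : DSVertex k m⦄, x ∈ X → y ∉ X → key k m x < key k m y)
    {x y y1 x2 : DSVertex k m} (hx : x ∈ X) (hy : y ∉ X) (hy1 : y1 ∉ X)
    (hx2 : x2 ∈ X) (h1 : rel2 k m C x y1) (h2 : rel2 k m C x2 y) : rel2 k m C x y := by
  -- first: x must be a c-vertex and y1 an a-vertex
  have step : ∀ u w, u ∈ X → w ∉ X → rel2 k m C u w →
      ∃ (i : Fin m) (i' : Fin m) (s : ↥(SS k)),
        u = Sum.inr (Sum.inr (Sum.inr (Sum.inr i))) ∧ w = Sum.inl (i', s) ∧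
        i = i' ∧ ∃ q : Fin 3, memSLit k (C i q) s.val := by
    intro u w hu hw hr
    rcases u with ⟨i, s⟩ | ⟨i, j⟩ | ⟨ib, t⟩ | ⟨ib, t⟩ | i <;>
      rcases w with ⟨i', s'⟩ | ⟨i', j'⟩ | ⟨ib', t'⟩ | ⟨ib', t'⟩ | i' <;>
      simp only [rel2] at hr
    · -- a – c : impossible
      exfalso
      obtain ⟨h1i, -⟩ := hr
      have h := hc hu hw
      rw [key, key, lex3_lt, h1i] at h
      omega
    · exact ⟨i, i', s', rfl, rfl, hr.1, hr.2⟩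
  obtain ⟨i, i1, s1, hxeq, hy1eq, hii1, -⟩ := step x y1 hx hy1 h1
  obtain ⟨i2, iy, sy, hx2eq, hyeq, hi2y, hq⟩ := step x2 y hx2 hy h2
  have hii2 : i = i2 := by
    have ha := hc hx hy
    have hb := hc hx2 hy1
    rw [hxeq, hyeq, key, key, lex3_lt] at ha
    rw [hx2eq, hy1eq, key, key, lex3_lt] at hb
    exact Fin.ext (by omega)
  rw [hxeq, hyeq]
  exact ⟨by rw [hii2, hi2y], by rw [hii2]; exact hq⟩

end DSAux3

namespace DSAux4
open Finset DSAux DSAux2 DSAux3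
open scoped Classical

variable (k m : ℕ) (C : Fin m → Fin 3 → Lit) (X : Finset (DSVertex k m))

/-- some `b^i_t` lies outside `X` -/
def gB (i : ℕ) : Prop := ∃ (ib : Fin (m - 1)) (t : ↥(PP k)),
  (ib : ℕ) = i ∧ Sum.inr (Sum.inr (Sum.inl (ib, t))) ∉ X

/-- some `a^i_s` lies inside `X` -/
def gA (i : ℕ) : Prop := ∃ (ia : Fin m) (s : ↥(SS k)),
  (ia : ℕ) = i ∧ Sum.inl (ia, s) ∈ X

/-- some `a^i_s` lies outside `X` -/
def gA' (i : ℕ) : Prop := ∃ (ia : Fin m) (s : ↥(SS k)),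
  (ia : ℕ) = i ∧ Sum.inl (ia, s) ∉ X

/-- some `b̂^{i-1}_t` lies inside `X` -/
def gB' (i : ℕ) : Prop := ∃ (ib : Fin (m - 1)) (t : ↥(PP k)),
  (ib : ℕ) + 1 = i ∧ Sum.inr (Sum.inr (Sum.inr (Sum.inl (ib, t)))) ∈ X

noncomputable def B3 (j : Fin (2 * k)) : DSVertex k m → ZMod 2
  | Sum.inl (i, s) => if (j : ℕ) + 1 ∈ s.val ∧ gB k m X (i : ℕ) then 1 else 0
  | _ => 0

noncomputable def C3 (j : Fin (2 * k)) : DSVertex k m → ZMod 2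
  | Sum.inr (Sum.inr (Sum.inl (ib, t))) =>
      if (j : ℕ) + 1 ∈ t.val ∧ gA k m X (ib : ℕ) then 1 else 0
  | _ => 0

noncomputable def B4 (j : Fin (2 * k)) : DSVertex k m → ZMod 2
  | Sum.inr (Sum.inr (Sum.inr (Sum.inl (ib, t)))) =>
      if (j : ℕ) + 1 ∈ t.val ∧ gA' k m X ((ib : ℕ) + 1) then 1 else 0
  | _ => 0

noncomputable def C4 (j : Fin (2 * k)) : DSVertex k m → ZMod 2
  | Sum.inl (i, s) => if (j : ℕ) + 1 ∈ s.val ∧ gB' k m X (i : ℕ) then 1 else 0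
  | _ => 0

noncomputable def beta1 (x : DSVertex k m) : ZMod 2 :=
  if ∃ y, y ∉ X ∧ rel1 k m x y then 1 else 0

noncomputable def gamma1 (y : DSVertex k m) : ZMod 2 :=
  if ∃ x, x ∈ X ∧ rel1 k m x y then 1 else 0

noncomputable def beta2 (x : DSVertex k m) : ZMod 2 :=
  if ∃ y, y ∉ X ∧ rel2 k m C x y then 1 else 0

noncomputable def gamma2 (y : DSVertex k m) : ZMod 2 :=
  if ∃ x, x ∈ X ∧ rel2 k m C x y then 1 else 0

lemma S1eq (hc : ∀ ⦃x y : DSVertex k m⦄, x ∈ X → y ∉ X → key k m x < key k m y)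
    {x y : DSVertex k m} (hx : x ∈ X) (hy : y ∉ X) :
    beta1 k m X x * gamma1 k m X y = if rel1 k m x y then 1 else 0 := by
  unfold beta1 gamma1
  by_cases h : rel1 k m x y
  · rw [if_pos h, if_pos ⟨y, hy, h⟩, if_pos ⟨x, hx, h⟩, one_mul]
  · rw [if_neg h]
    by_cases hb : ∃ y', y' ∉ X ∧ rel1 k m x y'
    · by_cases hg : ∃ x', x' ∈ X ∧ rel1 k m x' y
      · obtain ⟨y1, hy1, h1⟩ := hb
        obtain ⟨x2, hx2, h2⟩ := hg
        exact absurd (L1 k m X hc hx hy hy1 hx2 h1 h2) h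
      · rw [if_neg hg, mul_zero]
    · rw [if_neg hb, zero_mul]

lemma S2eq (hc : ∀ ⦃x y : DSVertex k m⦄, x ∈ X → y ∉ X → key k m x < key k m y)
    {x y : DSVertex k m} (hx : x ∈ X) (hy : y ∉ X) :
    beta2 k m C X x * gamma2 k m C X y = if rel2 k m C x y then 1 else 0 := by
  unfold beta2 gamma2
  by_cases h : rel2 k m C x y
  · rw [if_pos h, if_pos ⟨y, hy, h⟩, if_pos ⟨x, hx, h⟩, one_mul]
  · rw [if_neg h]
    by_cases hb : ∃ y', y' ∉ X ∧ rel2 k m C x y'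
    · by_cases hg : ∃ x', x' ∈ X ∧ rel2 k m C x' y
      · obtain ⟨y1, hy1, h1⟩ := hb
        obtain ⟨x2, hx2, h2⟩ := hg
        exact absurd (L2 k m C X hc hx hy hy1 hx2 h1 h2) h
      · rw [if_neg hg, mul_zero]
    · rw [if_neg hb, zero_mul]

lemma S3eq (hc : ∀ ⦃x y : DSVertex k m⦄, x ∈ X → y ∉ X → key k m x < key k m y)
    {x y : DSVertex k m} (hx : x ∈ X) (hy : y ∉ X) :
    (∑ j : Fin (2 * k), B3 k m X j x * C3 k m X j y) =
      if rel3 k m x y then 1 else 0 := by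
  rcases x with ⟨i, s⟩ | ⟨i, j⟩ | ⟨ib, t⟩ | ⟨ib, t⟩ | i <;>
    rcases y with ⟨i', s'⟩ | ⟨i', j'⟩ | ⟨ib', t'⟩ | ⟨ib', t'⟩ | i' <;>
    first
      | (simp only [B3, C3, rel3, mul_zero, zero_mul, Finset.sum_const_zero, if_false, ↓reduceIte]; done)
      | skip
  · -- x = a^i_s, y = b^{ib'}_{t'} : the real case
    by_cases hib : (i : ℕ) = (ib' : ℕ)
    · have hgB : gB k m X (i : ℕ) := ⟨ib', t', hib.symm, hy⟩
      have hgA : gA k m X (ib' : ℕ) := ⟨i, s, hib, hx⟩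
      simp only [B3, C3, hgB, hgA, and_true]
      rw [parity_sum k s.val t'.val (SS_subset k s.2) (PP_subset k t'.2)]
      by_cases hodd : Odd ((s.val ∩ t'.val).card)
      · rw [zmod2_odd hodd, if_pos ⟨hib, hodd⟩]
      · rw [zmod2_even hodd, if_neg (by simp [rel3, hodd])]
    · rw [if_neg (by simp [rel3, hib])]
      rcases lt_or_gt_of_ne hib with hlt | hgt
      · -- i < ib' : the two gates cannot both hold
        by_cases hgB : gB k m X (i : ℕ)
        · by_cases hgA : gA k m X (ib' : ℕ)
          · exfalso
            obtain ⟨ib1, t1, hib1, hb1⟩ := hgB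
            obtain ⟨ia, s1, hia, ha1⟩ := hgA
            have h := hc ha1 hb1
            rw [key, key, lex3_lt] at h
            omega
          · simp only [B3, C3, hgA, and_false, if_false, mul_zero, Finset.sum_const_zero]
        · simp only [B3, C3, hgB, and_false, if_false, zero_mul, Finset.sum_const_zero]
      · -- i > ib' : impossible crossing
        exfalso
        have h := hc hx hy
        rw [key, key, lex3_lt] at h
        omega
  · -- x = b^{ib}_t, y = a^{i'}_{s'} : reversed; impossible if adjacent
    by_cases hr : rel3 k m (Sum.inr (Sum.inr (Sum.inl (ib, t)))) (Sum.inl (i', s'))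
    · exfalso
      obtain ⟨hib, -⟩ := hr
      have h := hc hx hy
      rw [key, key, lex3_lt] at h
      omega
    · rw [if_neg hr]
      simp only [B3, zero_mul, Finset.sum_const_zero]

lemma S4eq (hc : ∀ ⦃x y : DSVertex k m⦄, x ∈ X → y ∉ X → key k m x < key k m y)
    {x y : DSVertex k m} (hx : x ∈ X) (hy : y ∉ X) :
    (∑ j : Fin (2 * k), B4 k m X j x * C4 k m X j y) =
      if rel4 k m x y then 1 else 0 := by
  rcases x with ⟨i, s⟩ | ⟨i, j⟩ | ⟨ib, t⟩ | ⟨ib, t⟩ | i <;>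
    rcases y with ⟨i', s'⟩ | ⟨i', j'⟩ | ⟨ib', t'⟩ | ⟨ib', t'⟩ | i' <;>
    first
      | (simp only [B4, C4, rel4, mul_zero, zero_mul, Finset.sum_const_zero, if_false, ↓reduceIte]; done)
      | skip
  · -- x = a^i_s, y = b̂^{ib'}_{t'} : reversed; impossible if adjacent
    by_cases hr : rel4 k m (Sum.inl (i, s)) (Sum.inr (Sum.inr (Sum.inr (Sum.inl (ib', t')))))
    · exfalso
      obtain ⟨hib, -⟩ := hr
      have h := hc hx hy
      rw [key, key, lex3_lt] at h
      omega
    · rw [if_neg hr]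
      simp only [B4, zero_mul, Finset.sum_const_zero]
  · -- x = b̂^{ib}_t, y = a^{i'}_{s'} : the real case
    by_cases hib : (i' : ℕ) = (ib : ℕ) + 1
    · have hgA : gA' k m X ((ib : ℕ) + 1) := ⟨i', s', hib, hy⟩
      have hgB : gB' k m X (i' : ℕ) := ⟨ib, t, hib.symm, hx⟩
      simp only [B4, C4, hgA, hgB, and_true]
      have : (∑ j : Fin (2 * k),
          (if (j : ℕ) + 1 ∈ t.val then (1 : ZMod 2) else 0) *
          (if (j : ℕ) + 1 ∈ s'.val then (1 : ZMod 2) else 0)) =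
          ((s'.val ∩ t.val).card : ZMod 2) := by
        rw [Finset.inter_comm]
        exact parity_sum k t.val s'.val (PP_subset k t.2) (SS_subset k s'.2)
      rw [this]
      by_cases hodd : Odd ((s'.val ∩ t.val).card)
      · rw [zmod2_odd hodd, if_pos ⟨hib, hodd⟩]
      · rw [zmod2_even hodd, if_neg (by simp [rel4, hodd])]
    · rw [if_neg (by simp [rel4, hib])]
      have h := hc hx hy
      rw [key, key, lex3_lt] at h
      -- from the key inequality: 3*ib + 2 < 3*i' + 1, hence ib + 1 < i'
      have hlt : (ib : ℕ) + 1 < (i' : ℕ) := by omega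
      by_cases hgA : gA' k m X ((ib : ℕ) + 1)
      · by_cases hgB : gB' k m X (i' : ℕ)
        · exfalso
          obtain ⟨ia, s1, hia, ha1⟩ := hgA
          obtain ⟨ib1, t1, hib1, hb1⟩ := hgB
          have h2 := hc hb1 ha1
          rw [key, key, lex3_lt] at h2
          omega
        · simp only [B4, C4, hgB, and_false, if_false, mul_zero, Finset.sum_const_zero]
      · simp only [B4, C4, hgA, and_false, if_false, zero_mul, Finset.sum_const_zero]

end DSAux4

namespace DSAux5
open Finset DSAux DSAux2 DSAux3 DSAux4
open scoped Classical

lemma exists_enum (V : Type) [Fintype V] [DecidableEq V] (key : V → ℕ ×ₗ ℕ ×ₗ ℕ)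
    (hinj : Function.Injective key) :
    ∃ e : Fin (Fintype.card V) ≃ V,
      ∀ (p : ℕ) (u v : V), key u ≤ key v →
        v ∈ enumPrefix e p → u ∈ enumPrefix e p := by
  letI : LinearOrder V := LinearOrder.lift' key hinj
  have hle : ∀ u v : V, u ≤ v ↔ key u ≤ key v := fun u v => Iff.rfl
  let e1 : Fin (Fintype.card V) ≃o ↥(Finset.univ : Finset V) :=
    Finset.univ.orderIsoOfFin Finset.card_univ
  let e : Fin (Fintype.card V) ≃ V :=
    e1.toEquiv.trans (Equiv.subtypeUnivEquiv fun x => Finset.mem_univ x)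
  refine ⟨e, fun p u v hkey hv => ?_⟩
  simp only [enumPrefix, Finset.mem_image, Finset.mem_filter, Finset.mem_univ,
    true_and] at hv ⊢
  obtain ⟨jv, hjv, hev⟩ := hv
  by_cases huv : u = v
  · exact ⟨jv, hjv, by rw [hev, huv]⟩
  refine ⟨e.symm u, ?_, by simp⟩
  have hlt : u < v := lt_of_le_of_ne ((hle u v).mpr hkey) huv
  have hj : e.symm v = jv := by rw [← hev]; simp
  have hmono : e.symm u < e.symm v := by
    have hsym : ∀ a b : V, e.symm a ≤ e.symm b ↔ a ≤ b := by
      intro a b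
      have ha : e.symm a = e1.symm ⟨a, Finset.mem_univ a⟩ := rfl
      rw [ha, show e.symm b = e1.symm ⟨b, Finset.mem_univ b⟩ from rfl]
      rw [e1.symm.le_iff_le]
      exact Iff.rfl
    have h1 := (hsym u v).mpr (le_of_lt hlt)
    rcases lt_or_eq_of_le h1 with h | h
    · exact h
    · exact absurd (by simpa using congrArg e h) huv
  rw [hj] at hmono
  exact lt_trans (by exact_mod_cast hmono) hjv

variable (k m : ℕ) (C : Fin m → Fin 3 → Lit)

noncomputable def Bfun (X : Finset (DSVertex k m)) (x : DSVertex k m) :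
    (Fin (2 * k) ⊕ Fin (2 * k)) ⊕ (Fin 1 ⊕ Fin 1) → ZMod 2
  | Sum.inl (Sum.inl j) => B3 k m X j x
  | Sum.inl (Sum.inr j) => B4 k m X j x
  | Sum.inr (Sum.inl _) => beta1 k m X x
  | Sum.inr (Sum.inr _) => beta2 k m C X x

noncomputable def Cfun (X : Finset (DSVertex k m))
    (r : (Fin (2 * k) ⊕ Fin (2 * k)) ⊕ (Fin 1 ⊕ Fin 1)) (y : DSVertex k m) : ZMod 2 :=
  match r with
  | Sum.inl (Sum.inl j) => C3 k m X j y
  | Sum.inl (Sum.inr j) => C4 k m X j y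
  | Sum.inr (Sum.inl _) => gamma1 k m X y
  | Sum.inr (Sum.inr _) => gamma2 k m C X y

lemma cutRank_le [instD : DecidableEq (DSVertex k m)] (X : Finset (DSVertex k m))
    (hX : ∀ u v : DSVertex k m, key k m u ≤ key k m v → v ∈ X → u ∈ X) :
    cutRank (DSGraph k m C) X ≤ 4 * k + 2 := by
  classical
  have hc : ∀ ⦃x y : DSVertex k m⦄, x ∈ X → y ∉ X → key k m x < key k m y := by
    intro x y hx hy
    rcases lt_or_ge (key k m x) (key k m y) with h | h
    · exact h
    · exact absurd (hX y x h hx) hy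
  have hcard : Fintype.card ((Fin (2 * k) ⊕ Fin (2 * k)) ⊕ (Fin 1 ⊕ Fin 1)) = 4 * k + 2 := by
    simp [Fintype.card_sum]
    omega
  unfold cutRank
  rw [← hcard]
  apply rank_le_inner _
    (Matrix.of fun (x : ↥X) r => Bfun k m C X x.val r)
    (Matrix.of fun r (y : ↥(Xᶜ)) => Cfun k m C X r y.val)
  ext x y
  have hx : x.val ∈ X := x.2
  have hy : y.val ∉ X := Finset.mem_compl.mp y.2
  have hxy : x.val ≠ y.val := fun h => hy (h ▸ hx)
  have hadj : (DSGraph k m C).Adj x.val y.val ↔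
      (rel1 k m x.val y.val ∨ rel2 k m C x.val y.val ∨
        rel3 k m x.val y.val ∨ rel4 k m x.val y.val) := by
    rw [DSGraph, SimpleGraph.fromRel_adj, ← dsRel_iff k m C]
    simp [hxy]
  rw [Matrix.mul_apply]
  simp only [Matrix.of_apply]
  rw [Fintype.sum_sum_type, Fintype.sum_sum_type, Fintype.sum_sum_type]
  simp only [Bfun, Cfun]
  rw [Fin.sum_univ_one, Fin.sum_univ_one]
  rw [S3eq k m X hc hx hy, S4eq k m X hc hx hy, S1eq k m X hc hx hy,
    S2eq k m C X hc hx hy]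
  by_cases h1 : rel1 k m x.val y.val
  · have n2 := rel12 k m C x.val y.val h1
    have n3 := rel13 k m x.val y.val h1
    have n4 := rel14 k m x.val y.val h1
    simp [hadj, h1, n2, n3, n4]
  · by_cases h2 : rel2 k m C x.val y.val
    · have n3 := rel23 k m C x.val y.val h2
      have n4 := rel24 k m C x.val y.val h2
      simp [hadj, h1, h2, n3, n4]
    · by_cases h3 : rel3 k m x.val y.val
      · have n4 := rel34 k m x.val y.val h3
        simp [hadj, h1, h2, h3, n4]
      · by_cases h4 : rel4 k m x.val y.val
        · simp [hadj, h1, h2, h3, h4]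
        · simp [hadj, h1, h2, h3, h4]

end DSAux5

set_option synthInstance.maxSize 1024

/-- the graph of the dominating-set reduction admits an enumeration of its
vertices all of whose prefix cuts have `𝔽₂`-rank at most `4k + 2`; in particular its
linear rank-width is at most `4k + 2`. -/
theorem DSGraph_linear_rankwidth (k m : ℕ) (hk : 1 ≤ k) (hm : 1 ≤ m)
    (C : Fin m → Fin 3 → Lit) (hC : ∀ p q, LitOK k (C p q)) :
    ∃ e : Fin (Fintype.card (DSVertex k m)) ≃ DSVertex k m,
      ∀ p : ℕ, cutRank (DSGraph k m C) (enumPrefix e p) ≤ 4 * k + 2 := by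
  classical
  obtain ⟨e, he⟩ := DSAux5.exists_enum (DSVertex k m) (DSAux.key k m)
    (DSAux.key_injective k m)
  exact ⟨e, fun p => DSAux5.cutRank_le k m C (enumPrefix e p)
    (fun u v h hv => he p u v h hv)⟩
end

section
/- Let V be a finite set with |V| ≥ 3, let T be a branch decomposition of V, and let X ⊆ V with |X| ≥ 2. Then T has an edge e displaying a bipartition (L,R) of V such that 3·|L ∩ X| ≥ |X| and 3·|R ∩ X| ≥ |X|. -/
open SimpleGraph

section BranchAux

variable {N : Type*} [DecidableEq N] {G : SimpleGraph N} {u w : N}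

lemma my_bridge (hac : G.IsAcyclic) (h : G.Adj u w) :
    ¬ (G.deleteEdges {s(u,w)}).Reachable u w := by
  have := (isAcyclic_iff_forall_adj_isBridge.mp hac) h
  rw [isBridge_iff] at this
  exact this

lemma my_split_walk (u w : N) : ∀ {x y : N}, G.Walk x y →
    (G.deleteEdges {s(u,w)}).Reachable x y ∨
    ((G.deleteEdges {s(u,w)}).Reachable x u ∧ (G.deleteEdges {s(u,w)}).Reachable w y) ∨
    ((G.deleteEdges {s(u,w)}).Reachable x w ∧ (G.deleteEdges {s(u,w)}).Reachable u y) := by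
  intro x y p
  induction p with
  | nil => exact Or.inl Reachable.rfl
  | @cons a b c hab p ih =>
    by_cases he : s(a, b) = s(u, w)
    · rw [Sym2.eq_iff] at he
      rcases he with ⟨rfl, rfl⟩ | ⟨rfl, rfl⟩ <;>
        rcases ih with h' | ⟨h1, h2⟩ | ⟨h1, h2⟩ <;>
        [exact Or.inr (Or.inl ⟨Reachable.rfl, h'⟩);
         exact Or.inl (h1.symm.trans h2);
         exact Or.inl h2;
         exact Or.inr (Or.inr ⟨Reachable.rfl, h'⟩);
         exact Or.inl h2;
         exact Or.inl (h1.symm.trans h2)]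
    · have hadj : (G.deleteEdges {s(u,w)}).Adj a b := by simp [hab, he]
      rcases ih with h' | ⟨h1, h2⟩ | ⟨h1, h2⟩
      · exact Or.inl (hadj.reachable.trans h')
      · exact Or.inr (Or.inl ⟨hadj.reachable.trans h1, h2⟩)
      · exact Or.inr (Or.inr ⟨hadj.reachable.trans h1, h2⟩)

lemma my_split (huw : G.Adj u w) {x : N} (h : G.Reachable x u) :
    (G.deleteEdges {s(u,w)}).Reachable x u ∨ (G.deleteEdges {s(u,w)}).Reachable x w := by
  obtain ⟨p⟩ := h
  rcases my_split_walk u w p with h' | ⟨h1, h2⟩ | ⟨h1, h2⟩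
  · exact Or.inl h'
  · exact Or.inl h1
  · exact Or.inr h1

lemma my_avoid_walk {e : Sym2 N} {H : SimpleGraph N} (hw : w ∈ e) :
    ∀ {x y : N}, H.Walk x y →
    (H.deleteEdges {e}).Reachable x y ∨ (H.Reachable x w ∧ H.Reachable w y) := by
  intro x y p
  induction p with
  | nil => exact Or.inl Reachable.rfl
  | @cons a b c hab p ih =>
    by_cases he : s(a, b) = e
    · subst he
      rw [Sym2.mem_iff] at hw
      rcases hw with rfl | rfl
      · exact Or.inr ⟨Reachable.rfl, (hab.reachable).trans (Walk.reachable p)⟩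
      · exact Or.inr ⟨hab.reachable, Walk.reachable p⟩
    · have hadj : (H.deleteEdges {e}).Adj a b := by simp [hab, he]
      rcases ih with h' | ⟨h1, h2⟩
      · exact Or.inl (hadj.reachable.trans h')
      · exact Or.inr ⟨hab.reachable.trans h1, h2⟩

lemma my_avoid (hac : G.IsAcyclic) (huw : G.Adj u w) {e : Sym2 N} (hw : w ∈ e)
    {x : N} (h : (G.deleteEdges {s(u,w)}).Reachable x u) :
    ((G.deleteEdges {s(u,w)}).deleteEdges {e}).Reachable x u := by
  obtain ⟨p⟩ := h
  rcases my_avoid_walk hw p with h' | ⟨h1, h2⟩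
  · exact h'
  · exact absurd h2.symm (my_bridge hac huw)

lemma my_step_out (hne : u ≠ w) {x : N}
    (h : (G.deleteEdges {s(u,w)}).Reachable x w) (hx : x ≠ w) :
    ∃ z, (G.deleteEdges {s(u,w)}).Adj w z ∧
      ((G.deleteEdges {s(u,w)}).deleteEdges {s(w,z)}).Reachable x z := by
  obtain ⟨p⟩ := h.symm
  obtain ⟨q, hq⟩ := p.toPath
  cases q with
  | nil => exact absurd rfl hx.symm
  | @cons _ z _ hadj t =>
    rw [Walk.cons_isPath_iff] at hq
    refine ⟨z, hadj, Reachable.symm ⟨t.transfer _ ?_⟩⟩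
    intro e he
    rw [edgeSet_deleteEdges, Set.mem_diff]
    refine ⟨t.edges_subset_edgeSet he, ?_⟩
    simp only [Set.mem_singleton_iff]
    rintro rfl
    exact hq.2 (t.fst_mem_support_of_mem_edges he)

lemma del_swap (G : SimpleGraph N) (u w : N) :
    G.deleteEdges {s(w,u)} = G.deleteEdges {s(u,w)} := by rw [Sym2.eq_swap]

lemma reach_mono_aux {a : N} (hac : G.IsAcyclic) (huw : G.Adj u w) (hwa : G.Adj w a)
    (hau : a ≠ u) {x : N} (h : (G.deleteEdges {s(u,w)}).Reachable x u) :
    (G.deleteEdges {s(w,a)}).Reachable x w := by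
  have h1 := my_avoid hac huw (e := s(w,a)) (Sym2.mem_iff.mpr (Or.inl rfl)) h
  have h2 : (G.deleteEdges {s(u,w)}).deleteEdges {s(w,a)} ≤ G.deleteEdges {s(w,a)} := by
    rw [deleteEdges_deleteEdges]
    exact deleteEdges_anti Set.subset_union_right
  have hne : s(u,w) ∉ ({s(w,a)} : Set (Sym2 N)) := by
    simp only [Set.mem_singleton_iff, Sym2.eq_iff]
    push_neg
    exact ⟨fun h' => absurd h' huw.ne, fun h' => absurd h' (Ne.symm hau)⟩
  exact (h1.mono h2).trans (Adj.reachable (by simp only [deleteEdges_adj]; exact ⟨huw, hne⟩))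

/-- The set of elements of `X` whose leaf lies on the `w`-side of edge `uw`. -/
def sideS {V : Type*} (G : SimpleGraph N) (φ : V → N) (X : Finset V) (u w : N) : Set V :=
  {v : V | v ∈ X ∧ (G.deleteEdges {s(u, w)}).Reachable (φ v) w}

/-- The set of nodes on the `u`-side of edge `uw`. -/
def compS (G : SimpleGraph N) (u w : N) : Set N :=
  {x : N | (G.deleteEdges {s(u, w)}).Reachable x u}

end BranchAux

/-- let `V` be a finite set with `|V| ≥ 3` and let `T` (a tree on node set
`N` all of whose internal nodes have degree 3, whose leaves are in bijection with `V`
via `φ`) be a branch decomposition of `V`, and let `X ⊆ V` with `|X| ≥ 2`.  Then `T` has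
an edge `uw` displaying a bipartition `(L,R)` of `V` — where `L` (resp. `R`) consists of
the elements of `V` whose leaves lie in the component of `T - uw` containing `u`
(resp. `w`) — such that `3·|L ∩ X| ≥ |X|` and `3·|R ∩ X| ≥ |X|`. -/
theorem branchDecomposition_balanced_edge
    {V N : Type*} [Fintype V] [Fintype N] [DecidableEq N]
    (hV : 3 ≤ Fintype.card V)
    (T : SimpleGraph N) [DecidableRel T.Adj] (hT : T.IsTree)
    (hdeg : ∀ x : N, T.degree x = 1 ∨ T.degree x = 3)
    (φ : V → N) (hinj : Function.Injective φ)
    (hleaf : ∀ v : V, T.degree (φ v) = 1)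
    (hsurj : ∀ x : N, T.degree x = 1 → ∃ v : V, φ v = x)
    (X : Finset V) (hX : 2 ≤ X.card) :
    ∃ u w : N, T.Adj u w ∧
      X.card ≤ 3 * {v : V | v ∈ X ∧ (T.deleteEdges {s(u, w)}).Reachable (φ v) u}.ncard ∧
      X.card ≤ 3 * {v : V | v ∈ X ∧ (T.deleteEdges {s(u, w)}).Reachable (φ v) w}.ncard := by
  classical
  by_contra hcon
  push_neg at hcon
  have hac := hT.IsAcyclic
  -- reformulate the contradiction hypothesis
  have hH : ∀ u w : N, T.Adj u w →
      3 * (sideS T φ X w u).ncard < X.card ∨ 3 * (sideS T φ X u w).ncard < X.card := by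
    intro u w h
    by_cases h1 : X.card ≤ 3 * (sideS T φ X w u).ncard
    · right
      have hEq : {v : V | v ∈ X ∧ (T.deleteEdges {s(u, w)}).Reachable (φ v) u}
          = sideS T φ X w u := by
        unfold sideS; rw [del_swap]
      exact hcon u w h (by rw [hEq]; exact h1)
    · left; omega
  -- the split of X along each edge
  have hsplit : ∀ u w : N, T.Adj u w →
      (sideS T φ X u w).ncard + (sideS T φ X w u).ncard = X.card := by
    intro u w huw
    have hdisj : Disjoint (sideS T φ X u w) (sideS T φ X w u) := by
      rw [Set.disjoint_left]
      rintro v ⟨_, hv⟩ ⟨_, hv'⟩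
      rw [del_swap] at hv'
      exact my_bridge hac huw (hv'.symm.trans hv)
    have hunion : sideS T φ X u w ∪ sideS T φ X w u = (X : Set V) := by
      ext v
      simp only [sideS, Set.mem_union, Set.mem_setOf_eq, Finset.mem_coe]
      constructor
      · rintro (⟨h, _⟩ | ⟨h, _⟩) <;> exact h
      · intro hv
        rcases my_split huw (hT.isConnected.preconnected (φ v) u) with h | h
        · right; exact ⟨hv, by rw [del_swap]; exact h⟩
        · left; exact ⟨hv, h⟩
    rw [← Set.ncard_union_eq hdisj (Set.toFinite _) (Set.toFinite _), hunion,
      Set.ncard_coe_finset]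
  -- the measure and the set of directed edges with light tail side
  set K := Fintype.card N + 1 with hK
  set f : N × N → ℕ :=
    fun p => K * (sideS T φ X p.2 p.1).ncard + (compS T p.1 p.2).ncard with hf
  set D : Finset (N × N) :=
    Finset.univ.filter fun p => T.Adj p.1 p.2 ∧ 3 * (sideS T φ X p.2 p.1).ncard < X.card
    with hD
  have hDne : D.Nonempty := by
    have hX0 : (0:ℕ) < X.card := by omega
    obtain ⟨v, hv⟩ := Finset.card_pos.mp hX0
    have hdeg1 : 0 < (T.neighborFinset (φ v)).card := by
      have := hleaf v
      rw [← T.card_neighborFinset_eq_degree] at this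
      omega
    obtain ⟨z, hz⟩ := Finset.card_pos.mp hdeg1
    have hadj : T.Adj (φ v) z := (T.mem_neighborFinset _ _).mp hz
    rcases hH _ _ hadj with h | h
    · exact ⟨(φ v, z), Finset.mem_filter.mpr ⟨Finset.mem_univ _, hadj, h⟩⟩
    · exact ⟨(z, φ v), Finset.mem_filter.mpr ⟨Finset.mem_univ _, hadj.symm, h⟩⟩
  obtain ⟨⟨u, w⟩, hmemD, hmax⟩ := Finset.exists_max_image D f hDne
  rw [hD, Finset.mem_filter] at hmemD
  obtain ⟨-, huw, hlight⟩ := hmemD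
  dsimp only at huw hlight
  -- the generic "move along an edge increases the measure" step
  have hmove : ∀ a : N, T.Adj w a → a ≠ u →
      3 * (sideS T φ X a w).ncard < X.card → False := by
    intro a haw hau halight
    have hmemD' : (w, a) ∈ D := Finset.mem_filter.mpr ⟨Finset.mem_univ _, haw, halight⟩
    have hle := hmax (w, a) hmemD'
    -- side monotone
    have hs : sideS T φ X w u ⊆ sideS T φ X a w := by
      rintro v ⟨hvX, hv⟩
      rw [del_swap] at hv
      refine ⟨hvX, ?_⟩
      rw [del_swap]
      exact reach_mono_aux hac huw haw hau hv
    -- component strictly monotone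
    have hc : compS T u w ⊂ compS T w a := by
      constructor
      · intro x hx
        exact reach_mono_aux hac huw haw hau hx
      · intro hsub
        have hw1 : w ∈ compS T w a := Reachable.rfl
        have hw2 := hsub hw1
        exact my_bridge hac huw hw2.symm
    have hs' : (sideS T φ X w u).ncard ≤ (sideS T φ X a w).ncard :=
      Set.ncard_le_ncard hs (Set.toFinite _)
    have hc' : (compS T u w).ncard < (compS T w a).ncard :=
      Set.ncard_lt_ncard hc (Set.toFinite _)
    have : f (u, w) < f (w, a) := by
      simp only [hf]
      have := Nat.mul_le_mul_left K hs'
      omega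
    omega
  rcases hdeg w with hdw | hdw
  · -- leaf case: the w-side is at most a single element
    have h1 : (sideS T φ X u w).ncard ≤ 1 := by
      have hsub : ∀ v ∈ sideS T φ X u w, φ v = w := by
        rintro v ⟨hvX, hv⟩
        by_contra hvw
        obtain ⟨z, hz1, hz2⟩ := my_step_out huw.ne hv hvw
        rw [deleteEdges_adj] at hz1
        have hzmem : z ∈ T.neighborFinset w := (T.mem_neighborFinset _ _).mpr hz1.1
        have humem : u ∈ T.neighborFinset w := (T.mem_neighborFinset _ _).mpr huw.symm
        have hcard1 : (T.neighborFinset w).card ≤ 1 := by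
          rw [T.card_neighborFinset_eq_degree, hdw]
        have : z = u := Finset.card_le_one.mp hcard1 z hzmem u humem
        subst this
        exact hz1.2 (by rw [Sym2.eq_swap]; exact rfl)
      rw [Set.ncard_le_one (Set.toFinite _)]
      intro v1 hv1 v2 hv2
      exact hinj ((hsub v1 hv1).trans (hsub v2 hv2).symm)
    have h2 := hsplit u w huw
    omega
  · -- internal case: w has two other neighbors a, b
    have humem : u ∈ T.neighborFinset w := (T.mem_neighborFinset _ _).mpr huw.symm
    have hcard3 : (T.neighborFinset w).card = 3 := by
      rw [T.card_neighborFinset_eq_degree, hdw]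
    have hcard2 : ((T.neighborFinset w).erase u).card = 2 := by
      rw [Finset.card_erase_of_mem humem, hcard3]
    obtain ⟨a, b, hab, hset⟩ := Finset.card_eq_two.mp hcard2
    have hamem : a ∈ (T.neighborFinset w).erase u := by rw [hset]; simp
    have hbmem : b ∈ (T.neighborFinset w).erase u := by rw [hset]; simp
    have haw : T.Adj w a := (T.mem_neighborFinset _ _).mp (Finset.mem_of_mem_erase hamem)
    have hbw : T.Adj w b := (T.mem_neighborFinset _ _).mp (Finset.mem_of_mem_erase hbmem)
    have hau : a ≠ u := (Finset.mem_erase.mp hamem).1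
    have hbu : b ≠ u := (Finset.mem_erase.mp hbmem).1
    have hnbr : ∀ z : N, T.Adj w z → z = u ∨ z = a ∨ z = b := by
      intro z hz
      by_cases hzu : z = u
      · exact Or.inl hzu
      · have : z ∈ (T.neighborFinset w).erase u :=
          Finset.mem_erase.mpr ⟨hzu, (T.mem_neighborFinset _ _).mpr hz⟩
        rw [hset] at this
        simpa using Or.inr (by simpa using this)
    have hφw : ∀ v : V, φ v ≠ w := by
      intro v hv
      have h1 := hleaf v
      rw [hv, hdw] at h1
      omega
    -- sideS u w = sideS w a ∪ sideS w b, disjointly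
    have hsub_a : sideS T φ X w a ⊆ sideS T φ X u w := by
      rintro v ⟨hvX, hv⟩
      refine ⟨hvX, ?_⟩
      rw [del_swap T a w] at hv
      have := reach_mono_aux hac haw.symm huw.symm hau.symm hv
      rwa [del_swap] at this
    have hsub_b : sideS T φ X w b ⊆ sideS T φ X u w := by
      rintro v ⟨hvX, hv⟩
      refine ⟨hvX, ?_⟩
      rw [del_swap T b w] at hv
      have := reach_mono_aux hac hbw.symm huw.symm hbu.symm hv
      rwa [del_swap] at this
    have hcover : sideS T φ X u w ⊆ sideS T φ X w a ∪ sideS T φ X w b := by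
      rintro v ⟨hvX, hv⟩
      obtain ⟨z, hz1, hz2⟩ := my_step_out huw.ne hv (hφw v)
      rw [deleteEdges_adj] at hz1
      have hzu : z ≠ u := by
        rintro rfl
        exact hz1.2 (by rw [Sym2.eq_swap]; exact rfl)
      have hmono : (T.deleteEdges {s(u,w)}).deleteEdges {s(w,z)} ≤ T.deleteEdges {s(w,z)} := by
        rw [deleteEdges_deleteEdges]
        exact deleteEdges_anti Set.subset_union_right
      have hz3 := hz2.mono hmono
      rcases hnbr z hz1.1 with rfl | rfl | rfl
      · exact absurd rfl hzu
      · exact Or.inl ⟨hvX, hz3⟩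
      · exact Or.inr ⟨hvX, hz3⟩
    have hdisj : Disjoint (sideS T φ X w a) (sideS T φ X w b) := by
      rw [Set.disjoint_left]
      rintro v ⟨hvX, hva⟩ ⟨_, hvb⟩
      rw [del_swap T a w] at hva
      rw [del_swap T b w] at hvb
      have h1 := my_avoid hac haw.symm (e := s(w,b)) (Sym2.mem_iff.mpr (Or.inl rfl)) hva
      have h2 := my_avoid hac hbw.symm (e := s(w,a)) (Sym2.mem_iff.mpr (Or.inl rfl)) hvb
      rw [deleteEdges_deleteEdges] at h1 h2
      have hEq : ({s(a,w)} ∪ {s(w,b)} : Set (Sym2 N)) = {s(b,w)} ∪ {s(w,a)} := by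
        rw [show s(b,w) = s(w,b) from Sym2.eq_swap, show s(w,a) = s(a,w) from Sym2.eq_swap]
        exact Set.union_comm _ _
      rw [hEq] at h1
      have hreach : (T.deleteEdges ({s(b,w)} ∪ {s(w,a)})).Reachable a b := h1.symm.trans h2
      have hmono : T.deleteEdges ({s(b,w)} ∪ {s(w,a)}) ≤ T.deleteEdges {s(w,a)} :=
        deleteEdges_anti Set.subset_union_right
      have hbadj : (T.deleteEdges {s(w,a)}).Adj b w := by
        rw [deleteEdges_adj]
        refine ⟨hbw.symm, ?_⟩
        simp only [Set.mem_singleton_iff, Sym2.eq_iff]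
        push_neg
        exact ⟨fun h' => absurd h' hbw.ne', fun h' => absurd h' hab.symm⟩
      exact my_bridge hac haw ((hreach.mono hmono).trans hbadj.reachable).symm
    have hsum : (sideS T φ X u w).ncard
        = (sideS T φ X w a).ncard + (sideS T φ X w b).ncard := by
      have hEq : sideS T φ X u w = sideS T φ X w a ∪ sideS T φ X w b :=
        Set.Subset.antisymm hcover (Set.union_subset hsub_a hsub_b)
      rw [hEq, Set.ncard_union_eq hdisj (Set.toFinite _) (Set.toFinite _)]
    rcases hH w a haw with hwa_light | ha_light
    · exact hmove a haw hau hwa_light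
    · rcases hH w b hbw with hwb_light | hb_light
      · exact hmove b hbw hbu hwb_light
      · have h2 := hsplit u w huw
        omega
end

section
/- Let k ≥ 1 and let 𝒮 = {s ⊆ [2k] : |s ∩ [k]| = 1}. Let 𝒮₁, 𝒮₂ ⊆ 𝒮 be two distinct collections such that for every j ∈ [k], each of 𝒮₁ and 𝒮₂ contains at most one set s with s ∩ [k] = {j}. Then N(𝒮₁) ≠ N(𝒮₂), where N(𝒮') = {t ⊆ [2k] : there exists s ∈ 𝒮' with |s ∩ t| odd}. (Consequently, distinct independent subsets of the center A^{2k}[𝒮] of the construction, with each class 𝒮_j made a clique, have distinct neighborhoods in B^{2k}.) -/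
/-- The neighborhood of a collection `S` of subsets of `[2k]` in the universal
`2k`-rank cut: all `t ⊆ [2k]` such that `|s ∩ t|` is odd for some `s ∈ S`. -/
def cutNbhd2 (k : ℕ) (S : Finset (Finset ℕ)) : Set (Finset ℕ) :=
  {t | t ⊆ Finset.Icc 1 (2 * k) ∧ ∃ s ∈ S, Odd (s ∩ t).card}

private lemma card_inter_insertJ (s J : Finset ℕ) (m j' k : ℕ)
    (hJ : J ⊆ Finset.Icc 1 k) (hm : k < m) (hs : s ∩ Finset.Icc 1 k = {j'}) :
    (s ∩ insert m J).card
      = (if j' ∈ J then 1 else 0) + (if m ∈ s then 1 else 0) := by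
  classical
  have hmJ : m ∉ J := fun h => by have := (Finset.mem_Icc.mp (hJ h)).2; omega
  have h1 : s ∩ insert m J = (s ∩ J) ∪ (s ∩ {m}) := by
    ext x
    simp only [Finset.mem_inter, Finset.mem_insert, Finset.mem_union,
      Finset.mem_singleton]
    tauto
  have hsJ : s ∩ J = {j'} ∩ J := by
    have : s ∩ J = (s ∩ Finset.Icc 1 k) ∩ J := by
      rw [Finset.inter_assoc]
      congr 1
      exact (Finset.inter_eq_right.mpr hJ).symm
    rw [this, hs]
  have hdisj : Disjoint (s ∩ J) (s ∩ {m}) := by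
    rw [Finset.disjoint_left]
    intro x hx hx'
    have : x = m := Finset.mem_singleton.mp (Finset.mem_inter.mp hx').2
    exact hmJ (this ▸ (Finset.mem_inter.mp hx).2)
  rw [h1, Finset.card_union_of_disjoint hdisj, hsJ]
  congr 1
  · by_cases h : j' ∈ J
    · simp [h, Finset.singleton_inter_of_mem h]
    · simp [h, Finset.singleton_inter_of_notMem h]
  · by_cases h : m ∈ s
    · simp [h, Finset.inter_singleton_of_mem h]
    · simp [h, Finset.inter_singleton_of_notMem h]

private lemma key (k : ℕ) (S₁ S₂ : Finset (Finset ℕ))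
    (hS₁ : S₁ ⊆ SS k) (hS₂ : S₂ ⊆ SS k)
    (hone₂ : ∀ j ∈ Finset.Icc 1 k,
      (S₂.filter fun s => s ∩ Finset.Icc 1 k = {j}).card ≤ 1)
    (s : Finset ℕ) (hs₁ : s ∈ S₁) (hs₂ : s ∉ S₂) :
    ∃ t, t ∈ cutNbhd2 k S₁ ∧ t ∉ cutNbhd2 k S₂ := by
  classical
  -- basic facts about s
  have hsS : s ∈ SS k := hS₁ hs₁
  simp only [SS, Finset.mem_filter, Finset.mem_powerset] at hsS
  obtain ⟨hssub, hscard⟩ := hsS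
  obtain ⟨j, hj⟩ := Finset.card_eq_one.mp hscard
  have hjmem : j ∈ s ∩ Finset.Icc 1 k := by rw [hj]; exact Finset.mem_singleton_self j
  have hjs : j ∈ s := (Finset.mem_inter.mp hjmem).1
  have hjI : j ∈ Finset.Icc 1 k := (Finset.mem_inter.mp hjmem).2
  have hjI2 : j ∈ Finset.Icc 1 (2 * k) := by
    rw [Finset.mem_Icc] at hjI ⊢; omega
  -- tag facts about S₂ members
  have tag₂ : ∀ s' ∈ S₂, ∃ j', s' ∩ Finset.Icc 1 k = {j'} ∧ s' ⊆ Finset.Icc 1 (2 * k) := by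
    intro s' hs'
    have := hS₂ hs'
    simp only [SS, Finset.mem_filter, Finset.mem_powerset] at this
    obtain ⟨h1, h2⟩ := this
    obtain ⟨j', hj'⟩ := Finset.card_eq_one.mp h2
    exact ⟨j', hj', h1⟩
  have uniq₂ : ∀ j' ∈ Finset.Icc 1 k, ∀ a ∈ S₂, ∀ b ∈ S₂,
      a ∩ Finset.Icc 1 k = {j'} → b ∩ Finset.Icc 1 k = {j'} → a = b := by
    intro j' hj' a ha b hb hae hbe
    exact Finset.card_le_one.mp (hone₂ j' hj')
      a (Finset.mem_filter.mpr ⟨ha, hae⟩) b (Finset.mem_filter.mpr ⟨hb, hbe⟩)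
  by_cases hA : ∃ s₂ ∈ S₂, s₂ ∩ Finset.Icc 1 k = {j}
  · -- Case B: S₂ has a (unique) member s₂ tagged j, and s₂ ≠ s
    obtain ⟨s₂, hs₂S, htag⟩ := hA
    have hs₂sub : s₂ ⊆ Finset.Icc 1 (2 * k) := by
      obtain ⟨j', _, h⟩ := tag₂ s₂ hs₂S; exact h
    have hnes : s₂ ≠ s := fun h => hs₂ (h ▸ hs₂S)
    obtain ⟨m, hm⟩ : ∃ m, ¬(m ∈ s ↔ m ∈ s₂) := by
      by_contra h
      push_neg at h
      exact hnes ((Finset.ext fun x => h x).symm)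
    have hmI2 : m ∈ Finset.Icc 1 (2 * k) := by
      by_cases h : m ∈ s
      · exact hssub h
      · have : m ∈ s₂ := by tauto
        exact hs₂sub this
    have hmk : k < m := by
      by_contra h
      push_neg at h
      have hmI : m ∈ Finset.Icc 1 k := by
        rw [Finset.mem_Icc] at hmI2 ⊢; omega
      apply hm
      constructor
      · intro hms
        have : m ∈ s ∩ Finset.Icc 1 k := Finset.mem_inter.mpr ⟨hms, hmI⟩
        rw [hj] at this
        have : m = j := Finset.mem_singleton.mp this
        subst this
        have : m ∈ s₂ ∩ Finset.Icc 1 k := by rw [htag]; exact Finset.mem_singleton_self m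
        exact (Finset.mem_inter.mp this).1
      · intro hms
        have : m ∈ s₂ ∩ Finset.Icc 1 k := Finset.mem_inter.mpr ⟨hms, hmI⟩
        rw [htag] at this
        have : m = j := Finset.mem_singleton.mp this
        subst this
        exact hjs
    set J : Finset ℕ := (Finset.Icc 1 k).filter
      (fun j' => ∃ s' ∈ S₂, s' ∩ Finset.Icc 1 k = {j'} ∧ m ∈ s') with hJdef
    have hJsub : J ⊆ Finset.Icc 1 k := Finset.filter_subset _ _
    -- membership characterization
    have hJchar : ∀ s' ∈ S₂, ∀ j' ∈ Finset.Icc 1 k, s' ∩ Finset.Icc 1 k = {j'} →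
        (j' ∈ J ↔ m ∈ s') := by
      intro s' hs' j' hj'I htag'
      constructor
      · intro hjJ
        rw [hJdef, Finset.mem_filter] at hjJ
        obtain ⟨_, s'', hs''S, htag'', hms''⟩ := hjJ
        have : s'' = s' := uniq₂ j' hj'I s'' hs''S s' hs' htag'' htag'
        exact this ▸ hms''
      · intro hms'
        rw [hJdef, Finset.mem_filter]
        exact ⟨hj'I, s', hs', htag', hms'⟩
    refine ⟨insert m J, ⟨?_, s, hs₁, ?_⟩, ?_⟩
    · intro x hx
      rcases Finset.mem_insert.mp hx with h | h
      · exact h ▸ hmI2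
      · have := Finset.mem_Icc.mp (hJsub h)
        rw [Finset.mem_Icc]; omega
    · rw [card_inter_insertJ s J m j k hJsub hmk hj]
      have hjJiff : j ∈ J ↔ m ∈ s₂ := hJchar s₂ hs₂S j hjI htag
      by_cases h : m ∈ s
      · have : m ∉ s₂ := by tauto
        simp [h, hjJiff, this]
      · have : m ∈ s₂ := by tauto
        simp [h, hjJiff, this]
    · rintro ⟨-, s', hs', hodd⟩
      obtain ⟨j', htag', hsub'⟩ := tag₂ s' hs'
      have hj'I : j' ∈ Finset.Icc 1 k := by
        have : j' ∈ s' ∩ Finset.Icc 1 k := by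
          rw [htag']; exact Finset.mem_singleton_self j'
        exact (Finset.mem_inter.mp this).2
      rw [card_inter_insertJ s' J m j' k hJsub hmk htag'] at hodd
      have hiff := hJchar s' hs' j' hj'I htag'
      obtain ⟨c, hc⟩ := hodd
      by_cases h : m ∈ s'
      · rw [if_pos (hiff.mpr h), if_pos h] at hc; omega
      · rw [if_neg (fun hx => h (hiff.mp hx)), if_neg h] at hc; omega
  · -- Case A: no member of S₂ is tagged j; use t = {j}
    push_neg at hA
    refine ⟨{j}, ⟨Finset.singleton_subset_iff.mpr hjI2, s, hs₁, ?_⟩, ?_⟩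
    · rw [Finset.inter_singleton_of_mem hjs]
      simp
    · rintro ⟨-, s', hs', hodd⟩
      by_cases h : j ∈ s'
      · obtain ⟨j', htag', _⟩ := tag₂ s' hs'
        have : j ∈ s' ∩ Finset.Icc 1 k := Finset.mem_inter.mpr ⟨h, hjI⟩
        rw [htag'] at this
        have : j = j' := Finset.mem_singleton.mp this
        exact hA s' hs' (this ▸ htag')
      · rw [Finset.inter_singleton_of_notMem h] at hodd
        simp at hodd

/-- if `S₁, S₂ ⊆ 𝒮 = {s ⊆ [2k] : |s ∩ [k]| = 1}` are distinct collections
each containing, for every `j ∈ [k]`, at most one set `s` with `s ∩ [k] = {j}`, then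
`N(S₁) ≠ N(S₂)`. -/
theorem cutNbhd_ne_of_partial_assignments_ne (k : ℕ) (hk : 1 ≤ k)
    (S₁ S₂ : Finset (Finset ℕ)) (hS₁ : S₁ ⊆ SS k) (hS₂ : S₂ ⊆ SS k)
    (hone₁ : ∀ j ∈ Finset.Icc 1 k,
      (S₁.filter fun s => s ∩ Finset.Icc 1 k = {j}).card ≤ 1)
    (hone₂ : ∀ j ∈ Finset.Icc 1 k,
      (S₂.filter fun s => s ∩ Finset.Icc 1 k = {j}).card ≤ 1)
    (hne : S₁ ≠ S₂) :
    cutNbhd2 k S₁ ≠ cutNbhd2 k S₂ := by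
  classical
  obtain ⟨s, hs⟩ : ∃ s, ¬(s ∈ S₁ ↔ s ∈ S₂) := by
    by_contra h
    push_neg at h
    exact hne (Finset.ext fun x => h x)
  by_cases h1 : s ∈ S₁
  · have h2 : s ∉ S₂ := by tauto
    obtain ⟨t, ht₁, ht₂⟩ := key k S₁ S₂ hS₁ hS₂ hone₂ s h1 h2
    intro h
    exact ht₂ (h ▸ ht₁)
  · have h2 : s ∈ S₂ := by tauto
    obtain ⟨t, ht₁, ht₂⟩ := key k S₂ S₁ hS₂ hS₁ hone₁ s h2 h1
    intro h
    exact ht₂ (h ▸ ht₁)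
end
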